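/- arXiv:0711.1143 — 3 statements merged into one kernel-verified Lean document; each statement's English description precedes it below -/
import Mathlib

section
/- Explicit form of the L-process in the insurance setting: for Z ∈ L^∞ with representation Z = ∑_{t=1}^T z_t 1_{(t−1 < τ ≤ t)} + z_{T+1} 1_{(T < τ)}, the process (L_t(α, −Z))_{t∈𝕋} satisfies L_1(α, −Z) = e^{β_1 z_1} D_1 + h_1^{β_1} (1 − D_1), and for t = 2,...,T, L_t(α, −Z) = exp[β_t ∑_{s=1}^{t−1} (z_s − z_{s+1}) D_s] · [e^{β_t z_t} D_t + h_t^{β_t} (1 − D_t)]. -/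
/-!
On `{τ ≤ t}` the payoff `Z` is known at time `t`, while the survival event `{τ > t}` is an atom of
`F_t`. By backward induction, `L_t = exp (β_t Z)` on `{τ ≤ t}` and `L_t = h_t ^ β_t` on `{τ > t}`:
conditioning `L_{t+1}` on `F_t` averages it over the atom to
`exp (β_{t+1} z_{t+1}) q_t + h_{t+1} ^ β_{t+1} p_t = h_t ^ β_{t+1}`, and the power `β_t / β_{t+1}`
turns this into `h_t ^ β_t`. On `{τ ≤ t}` the telescoping sum `z_t + ∑_{s<t} (z_s - z_{s+1}) D_s`
equals `Z`, which rewrites the closed form as the stated formula.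
-/

open MeasureTheory Finset Real

noncomputable section

/-- `m ≤ MeasurableSpace.unsplit B` says that `B` is an atom of `m`. -/
@[reducible]
def MeasurableSpace.unsplit {Ω : Type*} (B : Set Ω) : MeasurableSpace Ω where
  MeasurableSet' A := Disjoint A B ∨ B ⊆ A
  measurableSet_empty := Or.inl (Set.empty_disjoint B)
  measurableSet_compl := by
    rintro A (hA | hA)
    · exact Or.inr hA.subset_compl_left
    · exact Or.inl (disjoint_compl_left.mono_right hA)
  measurableSet_iUnion f hf := by
    by_cases hsub : ∃ n, B ⊆ f n
    · obtain ⟨n, hn⟩ := hsub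
      exact Or.inr (hn.trans (Set.subset_iUnion f n))
    · push Not at hsub
      exact Or.inl (Set.disjoint_iUnion_left.mpr fun n => (hf n).resolve_right (hsub n))

theorem MeasurableSpace.comap_le_unsplit {Ω β : Type*} [MeasurableSpace β] {B : Set Ω}
    {f : Ω → β} {b : β} (hf : ∀ ω ∈ B, f ω = b) :
    MeasurableSpace.comap f ‹_› ≤ MeasurableSpace.unsplit B := by
  rintro _ ⟨E, -, rfl⟩
  by_cases hb : b ∈ E
  · exact Or.inr fun ω hω => by simp [Set.mem_preimage, hf ω hω, hb]
  · exact Or.inl (Set.disjoint_left.mpr fun ω hωE hω => hb (hf ω hω ▸ hωE))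

theorem condExp_ae_eq_of_atom {Ω : Type*} {m m₀ : MeasurableSpace Ω} {μ : Measure Ω}
    [IsFiniteMeasure μ] (hm : m ≤ m₀) {B : Set Ω} (hB : MeasurableSet[m] B)
    (hatom : m ≤ MeasurableSpace.unsplit B) {f g : Ω → ℝ} (hf : Integrable f μ)
    (hg : StronglyMeasurable[m] g) (hfg : Set.EqOn f g Bᶜ) {c : ℝ}
    (hgc : Set.EqOn g (fun _ => c) B) (hc : ∫ ω in B, f ω ∂μ = μ.real B * c) :
    μ[f | m] =ᵐ[μ] g := by
  have hB₀ : MeasurableSet B := hm B hB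
  have hg_int : Integrable g μ := by
    have hgB : IntegrableOn g B μ := (integrableOn_const (C := c)).congr_fun hgc.symm hB₀
    have hgBc : IntegrableOn g Bᶜ μ := hf.integrableOn.congr_fun hfg hB₀.compl
    simpa using hgB.union hgBc
  have hgB : ∫ ω in B, g ω ∂μ = ∫ ω in B, f ω ∂μ := by
    rw [setIntegral_congr_fun hB₀ hgc, setIntegral_const, hc, smul_eq_mul]
  refine (ae_eq_condExp_of_forall_setIntegral_eq hm hf (fun _ _ _ => hg_int.integrableOn)
    (fun A hA _ => ?_) hg.aestronglyMeasurable).symm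
  have hA₀ := hm A hA
  rcases hatom A hA with hdisj | hsub
  · exact setIntegral_congr_fun hA₀ fun ω hω => (hfg (hdisj.notMem_of_mem_left hω)).symm
  · have hoff : ∫ ω in A \ B, g ω ∂μ = ∫ ω in A \ B, f ω ∂μ :=
      setIntegral_congr_fun (hA₀.diff hB₀) fun ω hω => (hfg hω.2).symm
    rw [← integral_inter_add_sdiff hB₀ hg_int.integrableOn,
      ← integral_inter_add_sdiff hB₀ hf.integrableOn, Set.inter_eq_right.mpr hsub, hgB, hoff]

def insurancePayoff (z : ℕ → ℝ) (T : ℕ) (x : ℝ) : ℝ :=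
  (∑ t ∈ Icc 1 T, if (t : ℝ) - 1 < x ∧ x ≤ (t : ℝ) then z t else 0) +
    (if (T : ℝ) < x then z (T + 1) else 0)

section insurancePayoff

variable (z : ℕ → ℝ) {T : ℕ} {x : ℝ}

theorem insurancePayoff_of_mem_Ioc {k : ℕ} (hk : 1 ≤ k) (hkT : k ≤ T)
    (hx : x ∈ Set.Ioc ((k : ℝ) - 1) k) : insurancePayoff z T x = z k := by
  have hxT : ¬ (T : ℝ) < x := not_lt.mpr (hx.2.trans (by exact_mod_cast hkT))
  rw [insurancePayoff, if_neg hxT, add_zero, sum_eq_single_of_mem k (mem_Icc.mpr ⟨hk, hkT⟩)]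
  · exact if_pos hx
  · intro t _ htk
    refine if_neg fun ht => ?_
    rcases Nat.lt_or_gt_of_ne htk with hlt | hgt
    · have : (t : ℝ) + 1 ≤ k := by exact_mod_cast hlt
      linarith [hx.1, ht.2]
    · have : (k : ℝ) + 1 ≤ t := by exact_mod_cast hgt
      linarith [hx.2, ht.1]

theorem insurancePayoff_of_lt (hx : (T : ℝ) < x) : insurancePayoff z T x = z (T + 1) := by
  rw [insurancePayoff, if_pos hx, sum_eq_zero, zero_add]
  intro t ht
  have : (t : ℝ) ≤ T := by exact_mod_cast (mem_Icc.mp ht).2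
  exact if_neg fun h => by linarith [h.2]

theorem abs_insurancePayoff_le : |insurancePayoff z T x| ≤ ∑ t ∈ Icc 1 T, |z t| + |z (T + 1)| := by
  refine (abs_add_le _ _).trans (add_le_add ((abs_sum_le_sum_abs _ _).trans
    (sum_le_sum fun t _ => ?_)) ?_) <;> split_ifs <;> simp

theorem sum_add_eq_insurancePayoff (hx : 0 < x) :
    ∀ n : ℕ, x ≤ (n + 1 : ℕ) → n + 1 ≤ T →
      ∑ s ∈ Icc 1 n, (z s - z (s + 1)) * (if x ≤ s then 1 else 0) + z (n + 1) =
        insurancePayoff z T x := by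
  intro n
  induction n with
  | zero =>
    intro hx1 hT
    rw [insurancePayoff_of_mem_Ioc z le_rfl hT ⟨by simpa using hx, hx1⟩]
    simp
  | succ n ih =>
    intro hxn hnT
    by_cases hxle : x ≤ (n + 1 : ℕ)
    · rw [sum_Icc_succ_top (by omega), if_pos hxle, ← ih hxle (by omega)]
      ring
    · have hzero : ∀ s ∈ Icc 1 (n + 1), (z s - z (s + 1)) * (if x ≤ s then 1 else 0) = 0 :=
        fun s hs => by
          have : (s : ℝ) ≤ (n + 1 : ℕ) := by exact_mod_cast (mem_Icc.mp hs).2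
          rw [if_neg fun h => hxle (h.trans this), mul_zero]
      rw [sum_eq_zero hzero, zero_add,
        insurancePayoff_of_mem_Ioc z (by omega) hnT ⟨by push_cast at hxle ⊢; linarith, hxn⟩]

end insurancePayoff

theorem measurable_insurancePayoff (z : ℕ → ℝ) (T : ℕ) : Measurable (insurancePayoff z T) := by
  unfold insurancePayoff
  refine (Finset.measurable_sum _ fun t _ => Measurable.ite ?_ measurable_const
    measurable_const).add (Measurable.ite ?_ measurable_const measurable_const)
  · exact measurableSet_Ioc
  · exact measurableSet_Ioi

/-- The right-hand side of the formula for `L t`, with `d s` standing for `D s ω`. -/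
def lProcessFormula (z : ℕ → ℝ) (b : ℝ) (t : ℕ) (a : ℝ) (d : ℕ → ℝ) : ℝ :=
  exp (b * ∑ s ∈ Icc 1 (t - 1), (z s - z (s + 1)) * d s) * (exp (b * z t) * d t + a * (1 - d t))

theorem lProcessFormula_eq_ite (z : ℕ → ℝ) (b a : ℝ) {T t : ℕ} (ht : 1 ≤ t) (htT : t ≤ T)
    {x : ℝ} (hx : 0 < x) {d : ℕ → ℝ} (hd : ∀ s, d s = if x ≤ (s : ℝ) then 1 else 0) :
    lProcessFormula z b t a d = if x ≤ t then exp (b * insurancePayoff z T x) else a := by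
  rw [show d = _ from funext hd]
  obtain ⟨n, rfl⟩ : ∃ n, t = n + 1 := ⟨t - 1, by omega⟩
  rw [lProcessFormula, Nat.add_sub_cancel]
  split_ifs with hxt
  · rw [← sum_add_eq_insurancePayoff z hx n hxt htT, mul_add b, exp_add]
    ring
  · have hzero : ∀ s ∈ Icc 1 n, (z s - z (s + 1)) * (if x ≤ s then 1 else 0) = 0 :=
      fun s hs => by
        have : (s : ℝ) ≤ (n + 1 : ℕ) := by
          exact_mod_cast (mem_Icc.mp hs).2.trans (Nat.le_succ n)
        rw [if_neg fun h => hxt (h.trans this), mul_zero]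
    rw [sum_eq_zero hzero]
    simp

theorem measurable_lProcessFormula {Ω : Type*} {m : MeasurableSpace Ω} (z : ℕ → ℝ) (b a : ℝ)
    {t : ℕ} {D : ℕ → Ω → ℝ} (hD : ∀ s ≤ t, Measurable (D s)) :
    Measurable fun ω => lProcessFormula z b t a (fun s => D s ω) := by
  have hsum : Measurable fun ω => ∑ s ∈ Icc 1 (t - 1), (z s - z (s + 1)) * D s ω :=
    Finset.measurable_sum _ fun s hs =>
      (hD s ((mem_Icc.mp hs).2.trans (Nat.sub_le t 1))).const_mul _
  unfold lProcessFormula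
  have hDt := hD t le_rfl
  fun_prop

theorem nonneg_of_rpow_recursion {T : ℕ} {q p β e h : ℕ → ℝ} (hq : ∀ t < T, 0 ≤ q t)
    (hp : ∀ t < T, 0 ≤ p t) (he : ∀ t, 0 ≤ e t) (hhT : 0 ≤ h T)
    (hstep : ∀ t ∈ Icc 1 T, h (t - 1) = (e t * q (t - 1) + h t ^ β t * p (t - 1)) ^ (1 / β t)) :
    ∀ t ≤ T, 0 ≤ h t := by
  intro t ht
  induction ht using Nat.decreasingInduction with
  | self => exact hhT
  | of_succ k hk ih =>
    rw [← Nat.add_sub_cancel k 1, hstep (k + 1) (mem_Icc.mpr ⟨by omega, hk⟩), Nat.add_sub_cancel]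
    have := he (k + 1)
    have := hq k hk
    have := hp k hk
    have := rpow_nonneg ih (β (k + 1))
    positivity

theorem ite_exp_rpow_div {P : Prop} [Decidable P] {b b' c : ℝ} (hb' : b' ≠ 0) (hc : 0 ≤ c)
    (y : ℝ) :
    (if P then exp (b' * y) else c) ^ (b / b') = if P then exp (b * y) else (c ^ (1 / b')) ^ b := by
  split_ifs
  · rw [← exp_mul]
    field_simp
  · rw [← rpow_mul hc]
    ring_nf

section deathFiltration

variable {Ω : Type*} {τ : Ω → ℝ} {D : ℕ → Ω → ℝ} {ℋ : ℕ → MeasurableSpace Ω}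

theorem measurable_death [MeasurableSpace Ω] (hτ : Measurable τ)
    (hD : ∀ t ω, D t ω = if τ ω ≤ (t : ℝ) then 1 else 0) (t : ℕ) : Measurable (D t) := by
  rw [show D t = fun ω => if τ ω ≤ (t : ℝ) then 1 else 0 from funext (hD t)]
  exact Measurable.ite (measurableSet_le hτ measurable_const) measurable_const measurable_const

theorem measurable_death_filtration
    (hℋ : ∀ t, ℋ t = ⨆ s ∈ range (t + 1), MeasurableSpace.comap (D s) inferInstance)
    {s t : ℕ} (hst : s ≤ t) : Measurable[ℋ t] (D s) := by
  refine Measurable.of_comap_le ?_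
  rw [hℋ]
  exact le_iSup₂ (f := fun s (_ : s ∈ range (t + 1)) => MeasurableSpace.comap (D s) inferInstance)
    s (mem_range.mpr (by omega))

theorem deathFiltration_le [mΩ : MeasurableSpace Ω] (hτ : Measurable τ)
    (hD : ∀ t ω, D t ω = if τ ω ≤ (t : ℝ) then 1 else 0)
    (hℋ : ∀ t, ℋ t = ⨆ s ∈ range (t + 1), MeasurableSpace.comap (D s) inferInstance) (t : ℕ) :
    ℋ t ≤ mΩ := by
  rw [hℋ]
  exact iSup₂_le fun s _ => (measurable_death hτ hD s).comap_le

theorem measurableSet_deathFiltration_survival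
    (hD : ∀ t ω, D t ω = if τ ω ≤ (t : ℝ) then 1 else 0)
    (hℋ : ∀ t, ℋ t = ⨆ s ∈ range (t + 1), MeasurableSpace.comap (D s) inferInstance) (t : ℕ) :
    MeasurableSet[ℋ t] {ω | (t : ℝ) < τ ω} := by
  have hD_zero : {ω | (t : ℝ) < τ ω} = D t ⁻¹' {0} := by
    ext ω
    by_cases h : τ ω ≤ t <;> simp [hD, h, lt_of_not_ge]
  rw [hD_zero]
  exact measurable_death_filtration hℋ le_rfl (measurableSet_singleton 0)

theorem deathFiltration_le_unsplit_survival
    (hD : ∀ t ω, D t ω = if τ ω ≤ (t : ℝ) then 1 else 0)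
    (hℋ : ∀ t, ℋ t = ⨆ s ∈ range (t + 1), MeasurableSpace.comap (D s) inferInstance) (t : ℕ) :
    ℋ t ≤ MeasurableSpace.unsplit {ω | (t : ℝ) < τ ω} := by
  rw [hℋ]
  refine iSup₂_le fun s hs => MeasurableSpace.comap_le_unsplit (b := 0) fun ω hω => ?_
  have : (s : ℝ) ≤ t := by exact_mod_cast Nat.lt_succ_iff.mp (mem_range.mp hs)
  rw [hD, if_neg (by linarith [show (t : ℝ) < τ ω from hω])]

end deathFiltration

section survivalStep

variable {Ω : Type*} [MeasurableSpace Ω] {μ : Measure Ω} [IsFiniteMeasure μ] {τ : Ω → ℝ}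

theorem integrable_ite_exp_insurancePayoff (hτ : Measurable τ) (z : ℕ → ℝ) (T : ℕ)
    (r b v : ℝ) :
    Integrable (fun ω => if τ ω ≤ r then exp (b * insurancePayoff z T (τ ω)) else v) μ := by
  set M := ∑ t ∈ Icc 1 T, |z t| + |z (T + 1)|
  refine Integrable.of_bound (Measurable.ite (measurableSet_le hτ measurable_const)
    ((measurable_insurancePayoff z T).comp hτ |>.const_mul b |>.exp)
    measurable_const).aestronglyMeasurable (exp (|b| * M) + |v|) (ae_of_all _ fun ω => ?_)
  have hbP : b * insurancePayoff z T (τ ω) ≤ |b| * M := (le_abs_self _).trans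
    (by rw [abs_mul]; exact mul_le_mul_of_nonneg_left (abs_insurancePayoff_le z) (abs_nonneg b))
  split_ifs
  · rw [Real.norm_of_nonneg (exp_pos _).le]
    linarith [exp_le_exp.mpr hbP, abs_nonneg v]
  · rw [Real.norm_eq_abs]
    linarith [exp_pos (|b| * M)]

theorem setIntegral_survival_ite_exp_insurancePayoff (hτ : Measurable τ) (z : ℕ → ℝ)
    {T k : ℕ} (hkT : k < T) (b v : ℝ) {q : ℝ}
    (hq : q = μ.real {ω | (k : ℝ) < τ ω ∧ τ ω ≤ (k : ℝ) + 1} / μ.real {ω | (k : ℝ) < τ ω}) :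
    ∫ ω in {ω | (k : ℝ) < τ ω},
        (if τ ω ≤ ((k + 1 : ℕ) : ℝ) then exp (b * insurancePayoff z T (τ ω)) else v) ∂μ =
      μ.real {ω | (k : ℝ) < τ ω} * (exp (b * z (k + 1)) * q + v * (1 - q)) := by
  set B := {ω | (k : ℝ) < τ ω}
  set S := {ω | τ ω ≤ ((k + 1 : ℕ) : ℝ)}
  have hB : MeasurableSet B := measurableSet_lt measurable_const hτ
  have hS : MeasurableSet S := measurableSet_le hτ measurable_const
  have hq_mul : q * μ.real B = μ.real (B ∩ S) := by
    have hBS : B ∩ S = {ω | (k : ℝ) < τ ω ∧ τ ω ≤ (k : ℝ) + 1} := by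
      ext ω
      simp [B, S]
    rw [hq, ← hBS]
    refine div_mul_cancel_of_imp fun h0 => le_antisymm ?_ measureReal_nonneg
    exact (measureReal_mono Set.inter_subset_left).trans h0.le
  have hdeath : Set.EqOn (fun ω => if τ ω ≤ ((k + 1 : ℕ) : ℝ) then
      exp (b * insurancePayoff z T (τ ω)) else v) (fun _ => exp (b * z (k + 1))) (B ∩ S) :=
    fun ω hω => by
      have hωS : τ ω ≤ ((k + 1 : ℕ) : ℝ) := hω.2
      have hlow : ((k + 1 : ℕ) : ℝ) - 1 < τ ω := by
        push_cast
        linarith [show (k : ℝ) < τ ω from hω.1]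
      dsimp only
      rw [if_pos hωS, insurancePayoff_of_mem_Ioc z (by omega) hkT ⟨hlow, hωS⟩]
  have hsurvive : Set.EqOn (fun ω => if τ ω ≤ ((k + 1 : ℕ) : ℝ) then
      exp (b * insurancePayoff z T (τ ω)) else v) (fun _ => v) (B \ S) :=
    fun ω hω => if_neg hω.2
  rw [← integral_inter_add_sdiff hS (integrable_ite_exp_insurancePayoff hτ z T _ b v).integrableOn,
    setIntegral_congr_fun (hB.inter hS) hdeath, setIntegral_congr_fun (hB.diff hS) hsurvive,
    setIntegral_const, setIntegral_const, smul_eq_mul, smul_eq_mul]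
  have hsplit := measureReal_inter_add_sdiff (μ := μ) (s := B) hS
  linear_combination (v - exp (b * z (k + 1))) * hq_mul + v * hsplit

theorem condExp_ite_exp_insurancePayoff (hτ : Measurable τ) (hτpos : ∀ ω, 0 < τ ω)
    {D : ℕ → Ω → ℝ} (hD : ∀ t ω, D t ω = if τ ω ≤ (t : ℝ) then 1 else 0)
    {ℋ : ℕ → MeasurableSpace Ω}
    (hℋ : ∀ t, ℋ t = ⨆ s ∈ range (t + 1), MeasurableSpace.comap (D s) inferInstance)
    (z : ℕ → ℝ) {T k : ℕ} (hk : 1 ≤ k) (hkT : k < T) (b v : ℝ) {q : ℝ}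
    (hq : q = μ.real {ω | (k : ℝ) < τ ω ∧ τ ω ≤ (k : ℝ) + 1} / μ.real {ω | (k : ℝ) < τ ω}) :
    μ[fun ω => if τ ω ≤ ((k + 1 : ℕ) : ℝ) then exp (b * insurancePayoff z T (τ ω)) else v | ℋ k]
      =ᵐ[μ] fun ω => if τ ω ≤ k then exp (b * insurancePayoff z T (τ ω))
        else exp (b * z (k + 1)) * q + v * (1 - q) := by
  set c := exp (b * z (k + 1)) * q + v * (1 - q)
  have hg : (fun ω => if τ ω ≤ k then exp (b * insurancePayoff z T (τ ω)) else c) =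
      fun ω => lProcessFormula z b k c (fun s => D s ω) := by
    funext ω
    rw [lProcessFormula_eq_ite z b c hk hkT.le (hτpos ω) (hD · ω)]
  refine condExp_ae_eq_of_atom (deathFiltration_le hτ hD hℋ k)
    (measurableSet_deathFiltration_survival hD hℋ k) (deathFiltration_le_unsplit_survival hD hℋ k)
    (integrable_ite_exp_insurancePayoff hτ z T _ b v) ?_ (fun ω hω => ?_)
    (fun ω hω => if_neg (not_le.mpr hω))
    (setIntegral_survival_ite_exp_insurancePayoff hτ z hkT b v hq)
  · rw [hg]
    exact (measurable_lProcessFormula z b c fun s hs =>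
      measurable_death_filtration hℋ hs).stronglyMeasurable
  · have hωk : τ ω ≤ k := not_lt.mp hω
    have hωk' : τ ω ≤ ((k + 1 : ℕ) : ℝ) := hωk.trans (by exact_mod_cast k.le_succ)
    simp only [if_pos hωk, if_pos hωk']

end survivalStep

theorem L_ae_eq_closedForm {Ω : Type*} [MeasurableSpace Ω] {μ : Measure Ω} [IsFiniteMeasure μ]
    {T : ℕ} {τ : Ω → ℝ} (hτ : Measurable τ) (hτpos : ∀ ω, 0 < τ ω) {D : ℕ → Ω → ℝ}
    (hD : ∀ t ω, D t ω = if τ ω ≤ (t : ℝ) then 1 else 0) {ℋ : ℕ → MeasurableSpace Ω}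
    (hℋ : ∀ t, ℋ t = ⨆ s ∈ range (t + 1), MeasurableSpace.comap (D s) inferInstance)
    {q p : ℕ → ℝ}
    (hq : ∀ t < T,
      q t = μ.real {ω | (t : ℝ) < τ ω ∧ τ ω ≤ (t : ℝ) + 1} / μ.real {ω | (t : ℝ) < τ ω})
    (hp : ∀ t < T, p t = 1 - q t) {β : ℕ → ℝ} (hβ : ∀ t ∈ Icc 1 T, β t ≠ 0) (z : ℕ → ℝ)
    {L : ℕ → Ω → ℝ} (hLT : L T =ᵐ[μ] fun ω => exp (β T * insurancePayoff z T (τ ω)))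
    (hLstep : ∀ t ∈ Icc 2 T,
      L (t - 1) =ᵐ[μ] fun ω => (μ[L t | ℋ (t - 1)] ω) ^ (β (t - 1) / β t))
    {h : ℕ → ℝ} (hhT : h T = exp (z (T + 1)))
    (hhstep : ∀ t ∈ Icc 1 T,
      h (t - 1) = (exp (β t * z t) * q (t - 1) + h t ^ β t * p (t - 1)) ^ (1 / β t)) :
    ∀ t ∈ Icc 1 T, L t =ᵐ[μ] fun ω =>
      if τ ω ≤ (t : ℝ) then exp (β t * insurancePayoff z T (τ ω)) else h t ^ β t := by
  have hq_nonneg : ∀ t < T, 0 ≤ q t := fun t ht => by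
    rw [hq t ht]
    positivity
  have hp_nonneg : ∀ t < T, 0 ≤ p t := fun t ht => by
    rw [hp t ht, hq t ht, sub_nonneg]
    exact div_le_one_of_le₀ (measureReal_mono fun ω hω => hω.1) measureReal_nonneg
  have hh_nonneg := nonneg_of_rpow_recursion hq_nonneg hp_nonneg (fun t => (exp_pos _).le)
    (hhT ▸ (exp_pos _).le) hhstep
  intro t ht
  obtain ⟨ht1, htT⟩ := mem_Icc.mp ht
  clear ht
  induction htT using Nat.decreasingInduction with
  | self =>
    refine hLT.trans (ae_of_all _ fun ω => ?_)
    dsimp only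
    split_ifs with hτT
    · rfl
    · rw [insurancePayoff_of_lt z (not_le.mp hτT), hhT, ← exp_mul, mul_comm]
  | of_succ k hk ih =>
    have hLk := hLstep (k + 1) (mem_Icc.mpr ⟨by omega, hk⟩)
    have hhk := hhstep (k + 1) (mem_Icc.mpr ⟨by omega, hk⟩)
    rw [Nat.add_sub_cancel] at hLk hhk
    have hc : 0 ≤ exp (β (k + 1) * z (k + 1)) * q k + h (k + 1) ^ β (k + 1) * (1 - q k) := by
      rw [← hp k hk]
      have := hq_nonneg k hk
      have := hp_nonneg k hk
      have := rpow_nonneg (hh_nonneg (k + 1) hk) (β (k + 1))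
      positivity
    have hcond := (condExp_congr_ae (m := ℋ k) (ih (by omega))).trans
      (condExp_ite_exp_insurancePayoff hτ hτpos hD hℋ z ht1 hk (β (k + 1)) (h (k + 1) ^ β (k + 1))
        (hq k hk))
    refine hLk.trans (hcond.mono fun ω hω => ?_)
    dsimp only at hω ⊢
    rw [hω, ite_exp_rpow_div (hβ (k + 1) (mem_Icc.mpr ⟨by omega, hk⟩)) hc, hhk, hp k hk]

theorem L_process_insurance_formula_general
    {Ω : Type*} [mΩ : MeasurableSpace Ω] (μ : Measure Ω) [IsProbabilityMeasure μ]
    (T : ℕ) (hT : 1 ≤ T)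
    (τ : Ω → ℝ) (hτmeas : Measurable τ) (hτpos : ∀ ω, 0 < τ ω)
    (D : ℕ → Ω → ℝ) (hD : ∀ t ω, D t ω = if τ ω ≤ (t : ℝ) then 1 else 0)
    (ℋ : ℕ → MeasurableSpace Ω)
    (hℋ : ∀ t, ℋ t =
      ⨆ s ∈ Finset.range (t + 1), MeasurableSpace.comap (D s) (inferInstance : MeasurableSpace ℝ))
    (q p : ℕ → ℝ)
    (hq : ∀ t, t < T → q t =
      (μ {ω | (t : ℝ) < τ ω ∧ τ ω ≤ (t : ℝ) + 1}).toReal / (μ {ω | (t : ℝ) < τ ω}).toReal)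
    (hp : ∀ t, t < T → p t = 1 - q t)
    (α β : ℕ → ℝ) (hα : ∀ t ∈ Finset.Icc 1 T, 0 < α t)
    (hβ : ∀ t ∈ Finset.Icc 1 T, 1 / β t = ∑ k ∈ Finset.Icc t T, 1 / α k)
    (z : ℕ → ℝ) (Z : Ω → ℝ)
    (hZ : ∀ ω, Z ω =
      (∑ t ∈ Finset.Icc 1 T, if (t : ℝ) - 1 < τ ω ∧ τ ω ≤ (t : ℝ) then z t else 0) +
      (if (T : ℝ) < τ ω then z (T + 1) else 0))
    (L : ℕ → Ω → ℝ)
    -- `L` is the process `(L_t(α, -Z))`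
    (hLT : L T =ᵐ[μ] fun ω => Real.exp (-(α T) * (-Z ω)))
    (hLstep : ∀ t ∈ Finset.Icc 2 T,
      L (t - 1) =ᵐ[μ] fun ω => ((μ[L t | ℋ (t - 1)]) ω) ^ (β (t - 1) / β t))
    (h : ℕ → ℝ)
    (hhT : h T = Real.exp (z (T + 1)))
    (hhstep : ∀ t ∈ Finset.Icc 1 T,
      h (t - 1) = (Real.exp (β t * z t) * q (t - 1) + (h t) ^ (β t) * p (t - 1)) ^ (1 / β t)) :
    (L 1 =ᵐ[μ] fun ω =>
      Real.exp (β 1 * z 1) * D 1 ω + (h 1) ^ (β 1) * (1 - D 1 ω)) ∧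
    (∀ t ∈ Finset.Icc 2 T, L t =ᵐ[μ] fun ω =>
      Real.exp (β t * ∑ s ∈ Finset.Icc 1 (t - 1), (z s - z (s + 1)) * D s ω) *
        (Real.exp (β t * z t) * D t ω + (h t) ^ (β t) * (1 - D t ω))) := by
  have hβ_ne : ∀ t ∈ Icc 1 T, β t ≠ 0 := fun t ht => by
    obtain ⟨ht1, htT⟩ := mem_Icc.mp ht
    refine (one_div_pos.mp (hβ t ht ▸ sum_pos (fun k hk => ?_) ⟨t, mem_Icc.mpr ⟨le_rfl, htT⟩⟩)).ne'
    exact one_div_pos.mpr (hα k (mem_Icc.mpr ⟨ht1.trans (mem_Icc.mp hk).1, (mem_Icc.mp hk).2⟩))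
  have hβT : β T = α T := by
    have hβT := hβ T (mem_Icc.mpr ⟨hT, le_rfl⟩)
    rwa [Icc_self, sum_singleton, one_div, one_div, inv_inj] at hβT
  have hLT' : L T =ᵐ[μ] fun ω => exp (β T * insurancePayoff z T (τ ω)) :=
    hLT.trans (ae_of_all _ fun ω => by dsimp only; rw [neg_mul_neg, hZ ω, hβT]; rfl)
  have hclosed := L_ae_eq_closedForm hτmeas hτpos hD hℋ hq hp hβ_ne z hLT' hLstep hhT hhstep
  have hformula : ∀ t ∈ Icc 1 T, L t =ᵐ[μ] fun ω =>
      lProcessFormula z (β t) t (h t ^ β t) (fun s => D s ω) := fun t ht => by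
    refine (hclosed t ht).trans (ae_of_all _ fun ω => ?_)
    exact (lProcessFormula_eq_ite z _ _ (mem_Icc.mp ht).1 (mem_Icc.mp ht).2 (hτpos ω) (hD · ω)).symm
  refine ⟨(hformula 1 (mem_Icc.mpr ⟨le_rfl, hT⟩)).trans (ae_of_all _ fun ω => ?_),
    fun t ht => hformula t (Icc_subset_Icc_left one_le_two ht)⟩
  simp [lProcessFormula]

/-- Explicit form of the L-process in the insurance setting (Proposition 4.2):
for `Z = ∑_{t=1}^T z_t 1_{(t-1 < τ ≤ t)} + z_{T+1} 1_{(T < τ)}`, the process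
`(L_t(α, -Z))` is given by the formula `(L2)` in terms of the sequence `(h_t)`. -/
theorem L_process_insurance_formula
    {Ω : Type*} [mΩ : MeasurableSpace Ω] (μ : Measure Ω) [IsProbabilityMeasure μ]
    (T : ℕ) (hT : 1 ≤ T)
    (τ : Ω → ℝ) (hτmeas : Measurable τ) (hτpos : ∀ ω, 0 < τ ω)
    (hτcont : ∀ s : ℝ, 0 ≤ s → μ {ω | τ ω = s} = 0)
    (D : ℕ → Ω → ℝ) (hD : ∀ t ω, D t ω = if τ ω ≤ (t : ℝ) then 1 else 0)
    (ℋ : ℕ → MeasurableSpace Ω)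
    (hℋ : ∀ t, ℋ t =
      ⨆ s ∈ Finset.range (t + 1), MeasurableSpace.comap (D s) (inferInstance : MeasurableSpace ℝ))
    (q p : ℕ → ℝ)
    (hsurv : ∀ t, t < T → 0 < μ {ω | (t : ℝ) < τ ω})
    (hq : ∀ t, t < T → q t =
      (μ {ω | (t : ℝ) < τ ω ∧ τ ω ≤ (t : ℝ) + 1}).toReal / (μ {ω | (t : ℝ) < τ ω}).toReal)
    (hp : ∀ t, t < T → p t = 1 - q t)
    (α β : ℕ → ℝ) (hα : ∀ t ∈ Finset.Icc 1 T, 0 < α t)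
    (hβ : ∀ t ∈ Finset.Icc 1 T, 1 / β t = ∑ k ∈ Finset.Icc t T, 1 / α k)
    (z : ℕ → ℝ) (Z : Ω → ℝ)
    (hZ : ∀ ω, Z ω =
      (∑ t ∈ Finset.Icc 1 T, if (t : ℝ) - 1 < τ ω ∧ τ ω ≤ (t : ℝ) then z t else 0) +
      (if (T : ℝ) < τ ω then z (T + 1) else 0))
    (L : ℕ → Ω → ℝ)
    -- `L` is the process `(L_t(α, -Z))`
    (hLT : L T =ᵐ[μ] fun ω => Real.exp (-(α T) * (-Z ω)))
    (hLstep : ∀ t ∈ Finset.Icc 2 T,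
      L (t - 1) =ᵐ[μ] fun ω => ((μ[L t | ℋ (t - 1)]) ω) ^ (β (t - 1) / β t))
    (h : ℕ → ℝ)
    (hhT : h T = Real.exp (z (T + 1)))
    (hhstep : ∀ t ∈ Finset.Icc 1 T,
      h (t - 1) = (Real.exp (β t * z t) * q (t - 1) + (h t) ^ (β t) * p (t - 1)) ^ (1 / β t)) :
    (L 1 =ᵐ[μ] fun ω =>
      Real.exp (β 1 * z 1) * D 1 ω + (h 1) ^ (β 1) * (1 - D 1 ω)) ∧
    (∀ t ∈ Finset.Icc 2 T, L t =ᵐ[μ] fun ω =>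
      Real.exp (β t * ∑ s ∈ Finset.Icc 1 (t - 1), (z s - z (s + 1)) * D s ω) *
        (Real.exp (β t * z t) * D t ω + (h t) ^ (β t) * (1 - D t ω))) :=
  L_process_insurance_formula_general (mΩ := mΩ) μ T hT τ hτmeas hτpos D hD ℋ hℋ q p hq hp α β hα hβ
    z Z hZ L hLT hLstep h hhT hhstep
end
end

section
/- Premium formula: under exponential utility, deterministic interest rates (condition (R)) and the death-time filtration (condition (F)), for Z ∈ L^∞ with representation Z = ∑_{t=1}^T z_t 1_{(t−1 < τ ≤ t)} + z_{T+1} 1_{(T < τ)}, the indifference price is H(Z) = log h_0. -/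
open MeasureTheory Finset Real

noncomputable section

/-- `A(W)`: the set of admissible intertemporal allocations of the risk `W`:
adapted processes `(Y_t)_{t∈𝕋}` with each `Y_t` essentially bounded and
`∑_{t∈𝕋} Y_t/B_t = W` a.s. -/
def IsAlloc {Ω : Type*} [mΩ : MeasurableSpace Ω] (μ : Measure Ω) (T : ℕ)
    (ℱ : ℕ → MeasurableSpace Ω) (B : ℕ → Ω → ℝ) (W : Ω → ℝ) (Y : ℕ → Ω → ℝ) : Prop :=
  (∀ t ∈ Finset.Icc 1 T, Measurable[ℱ t] (Y t) ∧ ∃ C : ℝ, ∀ᵐ ω ∂μ, |Y t ω| ≤ C) ∧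
  ∀ᵐ ω ∂μ, ∑ t ∈ Finset.Icc 1 T, Y t ω / B t ω = W ω

/-- The integrated expected utility `∑_{t∈𝕋} E[u_t(Ỹ_t)]` of an allocation. -/
def allocVal {Ω : Type*} [mΩ : MeasurableSpace Ω] (μ : Measure Ω) (T : ℕ)
    (u : ℕ → ℝ → ℝ) (B : ℕ → Ω → ℝ) (Y : ℕ → Ω → ℝ) : ℝ :=
  ∑ t ∈ Finset.Icc 1 T, ∫ ω, u t (Y t ω / B t ω) ∂μ

/-- The utility functional `U(W) = sup { ∑_t E[u_t(Ỹ_t)] : Y ∈ A(W) }`. -/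
def Util {Ω : Type*} [mΩ : MeasurableSpace Ω] (μ : Measure Ω) (T : ℕ)
    (ℱ : ℕ → MeasurableSpace Ω) (u : ℕ → ℝ → ℝ) (B : ℕ → Ω → ℝ) (W : Ω → ℝ) : ℝ :=
  sSup {s : ℝ | ∃ Y, IsAlloc μ T ℱ B W Y ∧ s = allocVal μ T u B Y}

/-!
The death period `⌈τ⌉₊`, truncated at `T + 1`, is the only source of randomness, and at time `t`
one observes it only if it is at most `t`. So an adapted allocation is a function of finitely many
states and the problem is a finite concave maximization. The candidate optimum comes from the
first-order conditions: its marginal utilities `exp (-α_t X_t)` are state prices forming a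
martingale, and the backward recursion defining `h` is exactly this martingale property. The
tangent inequality of the concave utilities, together with the budget constraint, then shows that
no admissible allocation does better, so `U(a - Z) = (1 - exp (-β₁ (a - log h₀))) / β₁` for every
`a`. Comparing with `Z = 0`, for which `h ≡ 1`, gives `H(Z) = log h₀`.
-/

theorem exp_utility_le_tangent {c : ℝ} (hc : 0 < c) (x y : ℝ) :
    1 / c * (1 - exp (-c * y)) ≤ 1 / c * (1 - exp (-c * x)) + exp (-c * x) * (y - x) := by
  have hexp : exp (-c * y) = exp (-c * x) * exp (-c * (y - x)) := by
    rw [← exp_add]; ring_nf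
  have htangent : -c * (y - x) + 1 ≤ exp (-c * (y - x)) := add_one_le_exp _
  rw [hexp, div_mul_eq_mul_div, div_mul_eq_mul_div, div_add' _ _ _ hc.ne',
    div_le_div_iff_of_pos_right hc]
  nlinarith [mul_le_mul_of_nonneg_left htangent (exp_pos (-c * x)).le]

theorem sum_sum_le_of_supergradient {ι κ : Type*} {I : Finset ι} {K : Finset κ} {m : κ → ℝ}
    (hm : ∀ k ∈ K, 0 ≤ m k) {v : ι → ℝ → ℝ} {x y ρ : ι → κ → ℝ} {M W : κ → ℝ}
    (hsup : ∀ t ∈ I, ∀ k ∈ K, ∀ r, v t r ≤ v t (x t k) + ρ t k * (r - x t k))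
    (hprice : ∀ t ∈ I, ∑ k ∈ K, m k * (ρ t k * (y t k - x t k)) =
      ∑ k ∈ K, m k * (M k * (y t k - x t k)))
    (hx : ∀ k ∈ K, m k ≠ 0 → ∑ t ∈ I, x t k = W k)
    (hy : ∀ k ∈ K, m k ≠ 0 → ∑ t ∈ I, y t k = W k) :
    ∑ t ∈ I, ∑ k ∈ K, m k * v t (y t k) ≤ ∑ t ∈ I, ∑ k ∈ K, m k * v t (x t k) := by
  have hgap : ∑ t ∈ I, ∑ k ∈ K, m k * (ρ t k * (y t k - x t k)) = 0 := by
    rw [sum_congr rfl hprice, sum_comm]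
    refine sum_eq_zero fun k hk => ?_
    rw [← mul_sum, ← mul_sum, sum_sub_distrib]
    by_cases hmk : m k = 0
    · rw [hmk, zero_mul]
    · rw [hx k hk hmk, hy k hk hmk, sub_self, mul_zero, mul_zero]
  calc ∑ t ∈ I, ∑ k ∈ K, m k * v t (y t k)
      ≤ ∑ t ∈ I, ∑ k ∈ K, m k * (v t (x t k) + ρ t k * (y t k - x t k)) :=
        sum_le_sum fun t ht => sum_le_sum fun k hk =>
          mul_le_mul_of_nonneg_left (hsup t ht k hk _) (hm k hk)
    _ = ∑ t ∈ I, ∑ k ∈ K, m k * v t (x t k) := by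
        simp only [mul_add, sum_add_distrib, hgap, add_zero]

theorem integral_comp_eq_sum {Ω : Type*} [MeasurableSpace Ω] (μ : Measure Ω) [IsFiniteMeasure μ]
    {φ : Ω → ℕ} (hφ : Measurable φ) {s : Finset ℕ} (hs : ∀ ω, φ ω ∈ s) (F : ℕ → ℝ) :
    ∫ ω, F (φ ω) ∂μ = ∑ k ∈ s, μ.real (φ ⁻¹' {k}) * F k := by
  have hmem : ∀ᵐ k ∂μ.map φ, k ∈ (s : Set ℕ) :=
    (ae_map_iff hφ.aemeasurable s.measurableSet).2 (ae_of_all _ hs)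
  rw [← integral_map hφ.aemeasurable (measurable_of_countable F).aestronglyMeasurable,
    ← Measure.restrict_eq_self_of_ae_mem hmem, setIntegral_finset s IntegrableOn.finset]
  simp [map_measureReal_apply hφ (measurableSet_singleton _)]

/-- `m k` is the probability of dying in period `k ∈ {1, …, T}`, and `m (T + 1)` that of
surviving period `T`; `q t` and `p t` are the probabilities of dying in, resp. surviving,
period `t + 1` given survival up to time `t`. -/
structure IsDeathLaw (T : ℕ) (m q p : ℕ → ℝ) : Prop where
  nonneg : ∀ k, 0 ≤ m k
  sum_eq_one : ∑ k ∈ Ioc 0 (T + 1), m k = 1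
  survival_pos : ∀ t < T, 0 < ∑ k ∈ Ioc t (T + 1), m k
  hazard : ∀ t < T, q t = m (t + 1) / ∑ k ∈ Ioc t (T + 1), m k
  survival : ∀ t < T, p t = 1 - q t

namespace IsDeathLaw

variable {T : ℕ} {m q p : ℕ → ℝ}

theorem q_nonneg (hm : IsDeathLaw T m q p) {t : ℕ} (ht : t < T) : 0 ≤ q t := by
  rw [hm.hazard t ht]
  exact div_nonneg (hm.nonneg _) (hm.survival_pos t ht).le

theorem p_nonneg (hm : IsDeathLaw T m q p) {t : ℕ} (ht : t < T) : 0 ≤ p t := by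
  have hle : m (t + 1) ≤ ∑ k ∈ Ioc t (T + 1), m k :=
    single_le_sum (fun k _ => hm.nonneg k) (by simp; omega)
  rw [hm.survival t ht, hm.hazard t ht, sub_nonneg, div_le_one (hm.survival_pos t ht)]
  exact hle

theorem q_add_p (hm : IsDeathLaw T m q p) {t : ℕ} (ht : t < T) : q t + p t = 1 := by
  rw [hm.survival t ht]; ring

theorem sum_Ioc_mul_eq_of_succ (hm : IsDeathLaw T m q p) {M : ℕ → ℝ} {t : ℕ} (ht : t < T)
    {σ : ℝ} (hσ : ∑ k ∈ Ioc (t + 1) (T + 1), m k * M k = σ * ∑ k ∈ Ioc (t + 1) (T + 1), m k) :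
    ∑ k ∈ Ioc t (T + 1), m k * M k =
      (q t * M (t + 1) + p t * σ) * ∑ k ∈ Ioc t (T + 1), m k := by
  have hsplit : ∀ f : ℕ → ℝ,
      ∑ k ∈ Ioc t (T + 1), f k = f (t + 1) + ∑ k ∈ Ioc (t + 1) (T + 1), f k := fun f => by
    rw [← insert_Ioc_add_one_left_eq_Ioc (by omega), sum_insert (by simp)]
  have hmq : m (t + 1) = q t * ∑ k ∈ Ioc t (T + 1), m k := by
    rw [hm.hazard t ht, div_mul_cancel₀ _ (hm.survival_pos t ht).ne']
  rw [hsplit (fun k => m k * M k), hσ, hsplit m, hm.survival t ht]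
  rw [hsplit m] at hmq
  linear_combination (M (t + 1) - σ) * hmq

end IsDeathLaw

structure IsTailAversion (T : ℕ) (α β : ℕ → ℝ) : Prop where
  pos : ∀ t ∈ Icc 1 T, 0 < α t
  one_div_eq_sum : ∀ t ∈ Icc 1 T, 1 / β t = ∑ k ∈ Icc t T, 1 / α k

namespace IsTailAversion

variable {T : ℕ} {α β : ℕ → ℝ}

theorem beta_pos (hαβ : IsTailAversion T α β) {t : ℕ} (ht : t ∈ Icc 1 T) : 0 < β t := by
  rw [← one_div_pos, hαβ.one_div_eq_sum t ht]
  have ht' := mem_Icc.mp ht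
  exact sum_pos (fun k hk => one_div_pos.mpr (hαβ.pos k (by simp at hk ⊢; omega)))
    ⟨t, by simp; omega⟩

theorem beta_last (hαβ : IsTailAversion T α β) (hT : 1 ≤ T) : β T = α T := by
  have h := hαβ.one_div_eq_sum T (by simp [hT])
  rw [Icc_self, sum_singleton] at h
  have := (hαβ.pos T (by simp [hT])).ne'
  have := (hαβ.beta_pos (t := T) (by simp [hT])).ne'
  field_simp at h
  linarith

theorem beta_succ_mul (hαβ : IsTailAversion T α β) {t : ℕ} (h1 : 1 ≤ t) (hT : t < T) :
    β (t + 1) * (1 - β t / α t) = β t := by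
  have h := hαβ.one_div_eq_sum t (by simp; omega)
  rw [← insert_Icc_add_one_left_eq_Icc hT.le, sum_insert (by simp),
    ← hαβ.one_div_eq_sum (t + 1) (by simp; omega)] at h
  have := (hαβ.pos t (by simp; omega)).ne'
  have := (hαβ.beta_pos (t := t) (by simp; omega)).ne'
  have := (hαβ.beta_pos (t := t + 1) (by simp; omega)).ne'
  field_simp at h ⊢
  linarith

end IsTailAversion

structure IsPremiumRecursion (T : ℕ) (β z q p h : ℕ → ℝ) : Prop where
  last : h T = exp (z (T + 1))
  step : ∀ t ∈ Icc 1 T,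
    h (t - 1) = (exp (β t * z t) * q (t - 1) + h t ^ β t * p (t - 1)) ^ (1 / β t)

namespace IsPremiumRecursion

variable {T : ℕ} {α β z q p h m : ℕ → ℝ}

theorem pos (hh : IsPremiumRecursion T β z q p h) (hm : IsDeathLaw T m q p) {t : ℕ}
    (ht : t ≤ T) : 0 < h t := by
  induction ht using Nat.decreasingInduction with
  | self => rw [hh.last]; exact exp_pos _
  | of_succ s hs ih =>
    have hstep := hh.step (s + 1) (by simp; omega)
    rw [Nat.add_sub_cancel] at hstep
    rw [hstep]
    refine rpow_pos_of_pos ?_ _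
    set x := exp (β (s + 1) * z (s + 1))
    set y := h (s + 1) ^ β (s + 1)
    calc 0 < min x y := lt_min (exp_pos _) (rpow_pos_of_pos ih _)
      _ = min x y * q s + min x y * p s := by rw [← mul_add, hm.q_add_p hs, mul_one]
      _ ≤ x * q s + y * p s := by
        gcongr
        exacts [hm.q_nonneg hs, min_le_left _ _, hm.p_nonneg hs, min_le_right _ _]

theorem rpow_beta_eq (hh : IsPremiumRecursion T β z q p h) (hm : IsDeathLaw T m q p)
    (hαβ : IsTailAversion T α β) {s : ℕ} (hs : s < T) :
    h s ^ β (s + 1) = exp (β (s + 1) * z (s + 1)) * q s + h (s + 1) ^ β (s + 1) * p s := by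
  have hbase : 0 ≤ exp (β (s + 1) * z (s + 1)) * q s + h (s + 1) ^ β (s + 1) * p s :=
    add_nonneg (mul_nonneg (exp_pos _).le (hm.q_nonneg hs))
      (mul_nonneg (rpow_nonneg (hh.pos hm hs).le _) (hm.p_nonneg hs))
  have hstep := hh.step (s + 1) (by simp; omega)
  rw [Nat.add_sub_cancel, one_div] at hstep
  rw [hstep, rpow_inv_rpow hbase (hαβ.beta_pos (by simp; omega)).ne']

end IsPremiumRecursion

section Prices

variable (α β z h : ℕ → ℝ) (a : ℝ)

/-- Discounted wealth left after period `t` on survival; `log h_t` is the certainty equivalent of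
the payments still due. -/
def wealth : ℕ → ℝ
  | 0 => a
  | t + 1 => wealth t - β (t + 1) / α (t + 1) * (wealth t - log (h (t + 1)))

/-- After death in period `j ≤ t`, the wealth left net of `z_j` is spread over the periods `t ≥ j`
in the proportions `β_j / α_t`; on survival (`j = t + 1`) the allocation is the consumption
`wealth (t - 1) - wealth t`. -/
def priceExponent (t j : ℕ) : ℝ :=
  if j ≤ t then β j * (wealth α β h a (j - 1) - z j)
  else β t * (wealth α β h a (t - 1) - log (h t))

def statePrice (t j : ℕ) : ℝ := exp (-priceExponent α β z h a t j)

def optimalAlloc (t j : ℕ) : ℝ := priceExponent α β z h a t j / α t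

def continuationPrice (s : ℕ) : ℝ := exp (-(β (s + 1) * (wealth α β h a s - log (h s))))

variable {α β z h a} {T : ℕ} {q p m : ℕ → ℝ}

theorem wealth_succ_sub_log (t : ℕ) :
    wealth α β h a (t + 1) - log (h (t + 1)) =
      (1 - β (t + 1) / α (t + 1)) * (wealth α β h a t - log (h (t + 1))) := by
  simp only [wealth]; ring

theorem wealth_last (hαβ : IsTailAversion T α β) (hT : 1 ≤ T) (hhT : h T = exp (z (T + 1))) :
    wealth α β h a T = z (T + 1) := by
  obtain ⟨s, rfl⟩ : ∃ s, T = s + 1 := ⟨T - 1, by omega⟩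
  have hlast := wealth_succ_sub_log (α := α) (β := β) (h := h) (a := a) s
  rw [hαβ.beta_last hT, div_self (hαβ.pos _ (by simp)).ne', sub_self, zero_mul, hhT,
    log_exp] at hlast
  linarith

theorem optimalAlloc_survival {t : ℕ} (ht : 1 ≤ t) :
    optimalAlloc α β z h a t (t + 1) = wealth α β h a (t - 1) - wealth α β h a t := by
  obtain ⟨s, rfl⟩ : ∃ s, t = s + 1 := ⟨t - 1, by omega⟩
  simp only [optimalAlloc, priceExponent, wealth, if_neg (by omega : ¬ s + 1 + 1 ≤ s + 1),
    Nat.add_sub_cancel]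
  ring

theorem sum_optimalAlloc (hαβ : IsTailAversion T α β) (hT : 1 ≤ T)
    (hhT : h T = exp (z (T + 1))) {k : ℕ} (hk : k ∈ Icc 1 (T + 1)) :
    ∑ t ∈ Icc 1 T, optimalAlloc α β z h a t (min k (t + 1)) = a - z k := by
  obtain ⟨hk1, hkT⟩ := mem_Icc.mp hk
  have hbefore : ∑ t ∈ Ico 1 k, optimalAlloc α β z h a t (min k (t + 1)) =
      a - wealth α β h a (k - 1) := by
    rw [sum_congr rfl fun t ht => by
      rw [min_eq_right (by simp at ht; omega), optimalAlloc_survival (by simp at ht; omega)]]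
    have htelescope := sum_Ico_sub (fun i => -wealth α β h a (i - 1)) hk1
    simp only [Nat.add_sub_cancel, sub_neg_eq_add, neg_add_eq_sub] at htelescope
    rw [htelescope]; rfl
  have hafter : ∑ t ∈ Ico k (T + 1), optimalAlloc α β z h a t (min k (t + 1)) =
      wealth α β h a (k - 1) - z k := by
    rcases hkT.lt_or_eq with hkT | rfl
    · have hkI : k ∈ Icc 1 T := mem_Icc.mpr ⟨hk1, by omega⟩
      rw [sum_congr rfl fun t ht => by
        rw [min_eq_left (by simp at ht; omega), optimalAlloc, priceExponent,
          if_pos (by simp at ht; omega), div_eq_mul_one_div],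
        ← mul_sum, Ico_add_one_right_eq_Icc, ← hαβ.one_div_eq_sum k hkI]
      field_simp [(hαβ.beta_pos hkI).ne']
    · rw [Ico_self, sum_empty, Nat.add_sub_cancel, wealth_last hαβ hT hhT, sub_self]
  rw [← Ico_add_one_right_eq_Icc, ← sum_Ico_consecutive _ hk1 (by omega), hbefore, hafter]
  ring

theorem continuationPrice_eq (hm : IsDeathLaw T m q p) (hαβ : IsTailAversion T α β)
    (hh : IsPremiumRecursion T β z q p h) {s : ℕ} (hs : s < T) :
    continuationPrice α β h a s =
      q s * statePrice α β z h a T (s + 1) + p s * statePrice α β z h a (s + 1) (s + 2) := by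
  have hrec := hh.rpow_beta_eq hm hαβ hs
  rw [rpow_def_of_pos (hh.pos hm hs.le), rpow_def_of_pos (hh.pos hm hs)] at hrec
  have hsplit : ∀ c : ℝ, exp (-(β (s + 1) * (wealth α β h a s - c))) =
      exp (-(β (s + 1) * wealth α β h a s)) * exp (c * β (s + 1)) := fun c => by
    rw [← exp_add]; ring_nf
  simp only [continuationPrice, statePrice, priceExponent, if_pos (by omega : s + 1 ≤ T),
    if_neg (by omega : ¬ s + 2 ≤ s + 1), Nat.add_sub_cancel]
  rw [hsplit, hsplit, hsplit, hrec, mul_comm (z (s + 1))]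
  ring

theorem statePrice_survival (hαβ : IsTailAversion T α β) {s : ℕ} (h1 : 1 ≤ s) (hs : s < T) :
    statePrice α β z h a s (s + 1) = continuationPrice α β h a s := by
  obtain ⟨r, rfl⟩ : ∃ r, s = r + 1 := ⟨s - 1, by omega⟩
  rw [statePrice, priceExponent, if_neg (by omega), Nat.add_sub_cancel, continuationPrice,
    wealth_succ_sub_log, ← mul_assoc, hαβ.beta_succ_mul h1 hs]

theorem sum_Ioc_mul_statePrice (hm : IsDeathLaw T m q p) (hαβ : IsTailAversion T α β)
    (hh : IsPremiumRecursion T β z q p h) {t : ℕ} (h1 : 1 ≤ t) (ht : t ≤ T) :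
    ∑ k ∈ Ioc t (T + 1), m k * statePrice α β z h a T k =
      statePrice α β z h a t (t + 1) * ∑ k ∈ Ioc t (T + 1), m k := by
  induction ht using Nat.decreasingInduction with
  | self => simp [← insert_Ioc_add_one_left_eq_Ioc (Nat.lt_succ_self T), mul_comm]
  | of_succ s hs ih =>
    rw [hm.sum_Ioc_mul_eq_of_succ hs (ih (by omega)), statePrice_survival hαβ h1 hs,
      continuationPrice_eq hm hαβ hh hs]

theorem sum_mul_statePrice (hm : IsDeathLaw T m q p) (hαβ : IsTailAversion T α β) (hT : 1 ≤ T)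
    (hh : IsPremiumRecursion T β z q p h) :
    ∑ k ∈ Ioc 0 (T + 1), m k * statePrice α β z h a T k = exp (-(β 1 * (a - log (h 0)))) := by
  rw [hm.sum_Ioc_mul_eq_of_succ hT (sum_Ioc_mul_statePrice hm hαβ hh le_rfl hT),
    ← continuationPrice_eq hm hαβ hh hT, hm.sum_eq_one, mul_one]
  rfl

/-- The state prices at time `t` are the conditional expectations of the terminal ones. -/
theorem sum_mul_statePrice_min (hm : IsDeathLaw T m q p) (hαβ : IsTailAversion T α β)
    (hh : IsPremiumRecursion T β z q p h) {t : ℕ} (ht : t ∈ Icc 1 T) (d : ℕ → ℝ) :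
    ∑ k ∈ Ioc 0 (T + 1), m k * (statePrice α β z h a t (min k (t + 1)) * d (min k (t + 1))) =
      ∑ k ∈ Ioc 0 (T + 1), m k * (statePrice α β z h a T k * d (min k (t + 1))) := by
  obtain ⟨h1, hT⟩ := mem_Icc.mp ht
  rw [← sum_Ioc_consecutive _ (Nat.zero_le t) (by omega : t ≤ T + 1),
    ← sum_Ioc_consecutive _ (Nat.zero_le t) (by omega : t ≤ T + 1)]
  congr 1
  · refine sum_congr rfl fun k hk => ?_
    have hk := mem_Ioc.mp hk
    simp only [min_eq_left (by omega : k ≤ t + 1), statePrice, priceExponent,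
      if_pos hk.2, if_pos (hk.2.trans hT)]
  · have hmin : ∀ k ∈ Ioc t (T + 1), min k (t + 1) = t + 1 := fun k hk =>
      min_eq_right (by simp at hk; omega)
    have hsurvivor : ∑ k ∈ Ioc t (T + 1),
        m k * (statePrice α β z h a t (min k (t + 1)) * d (min k (t + 1))) =
          statePrice α β z h a t (t + 1) * d (t + 1) * ∑ k ∈ Ioc t (T + 1), m k := by
      rw [mul_sum]; exact sum_congr rfl fun k hk => by rw [hmin k hk]; ring
    have hterminal : ∑ k ∈ Ioc t (T + 1),
        m k * (statePrice α β z h a T k * d (min k (t + 1))) =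
          d (t + 1) * ∑ k ∈ Ioc t (T + 1), m k * statePrice α β z h a T k := by
      rw [mul_sum]; exact sum_congr rfl fun k hk => by rw [hmin k hk]; ring
    rw [hsurvivor, hterminal, sum_Ioc_mul_statePrice hm hαβ hh h1 hT]
    ring

theorem utility_optimalAlloc {u : ℕ → ℝ → ℝ}
    (hu : ∀ t x, u t x = 1 / α t * (1 - exp (-(α t) * x))) {t : ℕ} (hαt : α t ≠ 0) (j : ℕ) :
    u t (optimalAlloc α β z h a t j) = 1 / α t * (1 - statePrice α β z h a t j) := by
  rw [hu, optimalAlloc, statePrice, neg_mul, mul_div_cancel₀ _ hαt]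

theorem sum_sum_utility_optimalAlloc (hm : IsDeathLaw T m q p) (hαβ : IsTailAversion T α β)
    (hT : 1 ≤ T) (hh : IsPremiumRecursion T β z q p h) {u : ℕ → ℝ → ℝ}
    (hu : ∀ t x, u t x = 1 / α t * (1 - exp (-(α t) * x))) :
    ∑ t ∈ Icc 1 T, ∑ k ∈ Ioc 0 (T + 1), m k * u t (optimalAlloc α β z h a t (min k (t + 1))) =
      1 / β 1 * (1 - exp (-(β 1 * (a - log (h 0))))) := by
  have hperiod : ∀ t ∈ Icc 1 T,
      ∑ k ∈ Ioc 0 (T + 1), m k * u t (optimalAlloc α β z h a t (min k (t + 1))) =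
        1 / α t * (1 - exp (-(β 1 * (a - log (h 0))))) := fun t ht => by
    have hprice := sum_mul_statePrice_min (a := a) hm hαβ hh ht fun _ => 1
    simp only [mul_one, sum_mul_statePrice hm hαβ hT hh] at hprice
    simp only [utility_optimalAlloc hu (hαβ.pos t ht).ne', mul_sub, mul_one, sum_sub_distrib,
      mul_left_comm (m _), ← mul_sum, ← sum_mul, hm.sum_eq_one, hprice, one_mul]
  rw [sum_congr rfl hperiod, ← sum_mul, ← hαβ.one_div_eq_sum 1 (by simp [hT])]

theorem sum_sum_utility_le (hm : IsDeathLaw T m q p) (hαβ : IsTailAversion T α β) (hT : 1 ≤ T)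
    (hh : IsPremiumRecursion T β z q p h) {u : ℕ → ℝ → ℝ}
    (hu : ∀ t x, u t x = 1 / α t * (1 - exp (-(α t) * x))) {y : ℕ → ℕ → ℝ}
    (hy : ∀ k ∈ Ioc 0 (T + 1), m k ≠ 0 → ∑ t ∈ Icc 1 T, y t (min k (t + 1)) = a - z k) :
    ∑ t ∈ Icc 1 T, ∑ k ∈ Ioc 0 (T + 1), m k * u t (y t (min k (t + 1))) ≤
      1 / β 1 * (1 - exp (-(β 1 * (a - log (h 0))))) := by
  refine (sum_sum_le_of_supergradient (ρ := fun t k => statePrice α β z h a t (min k (t + 1)))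
    (M := statePrice α β z h a T) (fun k _ => hm.nonneg k) (fun t ht k _ r => ?_)
    (fun t ht => sum_mul_statePrice_min hm hαβ hh ht
      fun j => y t j - optimalAlloc α β z h a t j)
    (fun k hk _ => sum_optimalAlloc hαβ hT hh.last (by simp at hk ⊢; omega)) hy).trans_eq
    (sum_sum_utility_optimalAlloc hm hαβ hT hh hu)
  have hαt := hαβ.pos t ht
  rw [hu, hu, statePrice, ← mul_div_cancel₀ (priceExponent α β z h a t _) hαt.ne',
    ← optimalAlloc, neg_mul_eq_neg_mul]
  exact exp_utility_le_tangent hαt _ _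

end Prices

section DeathState

variable {Ω : Type*}

/-- The information at time `t`: the death period, with `t + 1` standing for survival up to `t`. -/
def deathState (t : ℕ) (τ : Ω → ℝ) (ω : Ω) : ℕ := min ⌈τ ω⌉₊ (t + 1)

variable {τ : Ω → ℝ} {T : ℕ}

theorem min_deathState {t : ℕ} (ht : t ≤ T) (ω : Ω) :
    min (deathState T τ ω) (t + 1) = deathState t τ ω := by
  simp only [deathState]; omega

theorem deathState_mem_Ioc {ω : Ω} (hτ : 0 < τ ω) : deathState T τ ω ∈ Ioc 0 (T + 1) := by
  have := Nat.ceil_pos.mpr hτ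
  simp only [deathState, mem_Ioc]; omega

theorem lt_deathState_iff {t : ℕ} (ht : t ≤ T) (ω : Ω) :
    t < deathState T τ ω ↔ (t : ℝ) < τ ω := by
  rw [deathState, lt_min_iff, Nat.lt_ceil]
  exact and_iff_left (by omega)

theorem deathState_eq_iff {t : ℕ} (ht : 1 ≤ t) (hT : t ≤ T) (ω : Ω) :
    deathState T τ ω = t ↔ (t : ℝ) - 1 < τ ω ∧ τ ω ≤ t := by
  rw [← Nat.cast_one, ← Nat.cast_sub ht, ← Nat.ceil_eq_iff (by omega), deathState]
  omega

theorem measurable_deathState [MeasurableSpace Ω] (hτ : Measurable τ) (t : ℕ) :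
    Measurable (deathState t τ) :=
  (Nat.measurable_ceil.comp hτ).min measurable_const

theorem iSup_comap_eq_comap_deathState {D : ℕ → Ω → ℝ}
    (hD : ∀ s ω, D s ω = if τ ω ≤ s then 1 else 0) (t : ℕ) :
    ⨆ s ∈ range (t + 1), MeasurableSpace.comap (D s) (inferInstance : MeasurableSpace ℝ) =
      MeasurableSpace.comap (deathState t τ) inferInstance := by
  apply le_antisymm
  · refine iSup₂_le fun s hs => ?_
    have hDs : D s = (fun j : ℕ => if j ≤ s then (1 : ℝ) else 0) ∘ deathState t τ := by
      funext ω
      simp only [hD, Function.comp_apply, deathState, ← Nat.ceil_le, min_le_iff]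
      grind
    rw [hDs]
    exact ((measurable_of_countable _).comp (comap_measurable _)).comap_le
  · refine (measurable_of_Iic fun j => ?_).comap_le
    by_cases hj : t + 1 ≤ j
    · have : deathState t τ ⁻¹' Set.Iic j = Set.univ := by
        ext ω; simp [deathState, hj]
      rw [this]; exact MeasurableSet.univ
    · have : deathState t τ ⁻¹' Set.Iic j = D j ⁻¹' {1} := by
        ext ω; simp [deathState, hD, hj, Nat.ceil_le]
      rw [this]
      exact le_iSup₂ (f := fun s (_ : s ∈ range (t + 1)) =>
        MeasurableSpace.comap (D s) (inferInstance : MeasurableSpace ℝ)) j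
        (by simp; omega) _ ⟨{1}, measurableSet_singleton 1, rfl⟩

theorem sum_ite_add_ite_eq_deathState {ω : Ω} (hτ : 0 < τ ω) (z : ℕ → ℝ) :
    (∑ t ∈ Icc 1 T, if (t : ℝ) - 1 < τ ω ∧ τ ω ≤ t then z t else 0) +
        (if (T : ℝ) < τ ω then z (T + 1) else 0) = z (deathState T τ ω) := by
  have hperiod : (∑ t ∈ Icc 1 T, if (t : ℝ) - 1 < τ ω ∧ τ ω ≤ t then z t else 0) =
      ∑ t ∈ Icc 1 T, if deathState T τ ω = t then z t else 0 :=
    sum_congr rfl fun t ht => by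
      simp only [deathState_eq_iff (mem_Icc.mp ht).1 (mem_Icc.mp ht).2]
  have hmem := mem_Ioc.mp (deathState_mem_Ioc (T := T) hτ)
  rw [hperiod, sum_ite_eq]
  simp only [← lt_deathState_iff (T := T) le_rfl]
  by_cases hsurv : T < deathState T τ ω
  · rw [if_neg (by simp; omega), if_pos hsurv, zero_add, (by omega : deathState T τ ω = T + 1)]
  · rw [if_pos (by simp; omega), if_neg hsurv, add_zero]

end DeathState

section Utility

variable {Ω : Type*} [MeasurableSpace Ω] {μ : Measure Ω} {τ : Ω → ℝ} {T : ℕ}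
  {ℋ : ℕ → MeasurableSpace Ω} {α β z q p h B : ℕ → ℝ} {Z : Ω → ℝ} {u : ℕ → ℝ → ℝ}

theorem isDeathLaw_deathState [IsProbabilityMeasure μ] (hτmeas : Measurable τ)
    (hτpos : ∀ ω, 0 < τ ω) (hsurv : ∀ t, t < T → 0 < μ {ω | (t : ℝ) < τ ω})
    (hq : ∀ t, t < T → q t =
      (μ {ω | (t : ℝ) < τ ω ∧ τ ω ≤ (t : ℝ) + 1}).toReal / (μ {ω | (t : ℝ) < τ ω}).toReal)
    (hp : ∀ t, t < T → p t = 1 - q t) :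
    IsDeathLaw T (fun k => μ.real (deathState T τ ⁻¹' {k})) q p := by
  have hsurvivors : ∀ t ≤ T, ∑ k ∈ Ioc t (T + 1), μ.real (deathState T τ ⁻¹' {k}) =
      μ.real {ω | (t : ℝ) < τ ω} := fun t ht => by
    rw [sum_measureReal_preimage_singleton _ fun k _ =>
      measurable_deathState hτmeas T (measurableSet_singleton k)]
    congr 1; ext ω
    simp only [Set.mem_preimage, coe_Ioc, Set.mem_Ioc, Set.mem_ofPred_eq, ← lt_deathState_iff ht]
    exact and_iff_left (min_le_right _ _)
  refine ⟨fun k => measureReal_nonneg, ?_, fun t ht => ?_, fun t ht => ?_, hp⟩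
  · simpa [hτpos] using hsurvivors 0 (Nat.zero_le T)
  · rw [hsurvivors t ht.le]
    exact ENNReal.toReal_pos (hsurv t ht).ne' (measure_ne_top μ _)
  · have hperiod : {ω | (t : ℝ) < τ ω ∧ τ ω ≤ (t : ℝ) + 1} = deathState T τ ⁻¹' {t + 1} := by
      ext ω
      simp [deathState_eq_iff (Nat.le_add_left 1 t) ht]
    rw [hq t ht, hsurvivors t ht.le, hperiod]
    rfl

theorem allocVal_eq_sum_sum [IsFiniteMeasure μ] (hτmeas : Measurable τ) (hτpos : ∀ ω, 0 < τ ω)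
    {Y : ℕ → Ω → ℝ} {x : ℕ → ℕ → ℝ}
    (hY : ∀ t ∈ Icc 1 T, ∀ ω, Y t ω / B t = x t (deathState t τ ω)) :
    allocVal μ T u (fun t _ => B t) Y = ∑ t ∈ Icc 1 T, ∑ k ∈ Ioc 0 (T + 1),
      μ.real (deathState T τ ⁻¹' {k}) * u t (x t (min k (t + 1))) := by
  refine sum_congr rfl fun t ht => ?_
  calc ∫ ω, u t (Y t ω / B t) ∂μ
      = ∫ ω, (fun k => u t (x t (min k (t + 1)))) (deathState T τ ω) ∂μ := by
        simp only [hY t ht, min_deathState (mem_Icc.mp ht).2]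
    _ = _ := integral_comp_eq_sum μ (measurable_deathState hτmeas T)
        (fun ω => deathState_mem_Ioc (hτpos ω)) fun k => u t (x t (min k (t + 1)))

theorem isAlloc_optimalAlloc (hτpos : ∀ ω, 0 < τ ω)
    (hℋ : ∀ t, ℋ t = MeasurableSpace.comap (deathState t τ) inferInstance)
    (hαβ : IsTailAversion T α β) (hT : 1 ≤ T) (hhT : h T = exp (z (T + 1)))
    (hB : ∀ t ∈ Icc 1 T, 0 < B t) (hZ : ∀ ω, Z ω = z (deathState T τ ω)) (a : ℝ) :
    IsAlloc μ T ℋ (fun t _ => B t) (fun ω => a - Z ω)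
      (fun t ω => B t * optimalAlloc α β z h a t (deathState t τ ω)) := by
  refine ⟨fun t ht => ⟨?_, ?_⟩, ae_of_all _ fun ω => ?_⟩
  · rw [hℋ t]
    exact (measurable_of_countable fun j => B t * optimalAlloc α β z h a t j).comp
      (comap_measurable (deathState t τ))
  · refine ⟨∑ j ∈ range (t + 2), |B t * optimalAlloc α β z h a t j|, ae_of_all _ fun ω => ?_⟩
    exact single_le_sum (f := fun j => |B t * optimalAlloc α β z h a t j|)
      (fun _ _ => abs_nonneg _) (mem_range.mpr (Nat.lt_succ_of_le (min_le_right _ _)))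
  · have hk := mem_Ioc.mp (deathState_mem_Ioc (T := T) (hτpos ω))
    calc ∑ t ∈ Icc 1 T, B t * optimalAlloc α β z h a t (deathState t τ ω) / B t
        = ∑ t ∈ Icc 1 T, optimalAlloc α β z h a t (min (deathState T τ ω) (t + 1)) :=
          sum_congr rfl fun t ht => by
            rw [mul_div_cancel_left₀ _ (hB t ht).ne', min_deathState (mem_Icc.mp ht).2]
      _ = a - Z ω := by
          rw [sum_optimalAlloc hαβ hT hhT (by simp; omega), hZ]

theorem allocVal_le_of_isAlloc [IsFiniteMeasure μ] (hτmeas : Measurable τ) (hτpos : ∀ ω, 0 < τ ω)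
    (hℋ : ∀ t, ℋ t = MeasurableSpace.comap (deathState t τ) inferInstance)
    (hlaw : IsDeathLaw T (fun k => μ.real (deathState T τ ⁻¹' {k})) q p)
    (hαβ : IsTailAversion T α β) (hT : 1 ≤ T) (hh : IsPremiumRecursion T β z q p h)
    (hu : ∀ t x, u t x = 1 / α t * (1 - exp (-(α t) * x)))
    (hZ : ∀ ω, Z ω = z (deathState T τ ω)) {a : ℝ} {Y : ℕ → Ω → ℝ}
    (hY : IsAlloc μ T ℋ (fun t _ => B t) (fun ω => a - Z ω) Y) :
    allocVal μ T u (fun t _ => B t) Y ≤ 1 / β 1 * (1 - exp (-(β 1 * (a - log (h 0))))) := by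
  obtain ⟨hadapted, hbudget⟩ := hY
  set y : ℕ → ℕ → ℝ := fun t => Function.extend (deathState t τ) (fun ω => Y t ω / B t) 0
  have hy : ∀ t ∈ Icc 1 T, ∀ ω, Y t ω / B t = y t (deathState t τ ω) := fun t ht ω =>
    ((((hℋ t ▸ (hadapted t ht).1).div_const (B t)).factorsThrough).extend_apply 0 ω).symm
  rw [allocVal_eq_sum_sum hτmeas hτpos hy]
  refine sum_sum_utility_le hlaw hαβ hT hh hu fun k hk hmk => ?_
  obtain ⟨ω, hωk, hω⟩ := Measure.exists_mem_of_measure_ne_zero_of_ae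
    (s := deathState T τ ⁻¹' {k}) (fun h0 => hmk (by rw [measureReal_def, h0, ENNReal.toReal_zero]))
    (ae_restrict_of_ae hbudget)
  rw [Set.mem_preimage, Set.mem_singleton_iff] at hωk
  beta_reduce at hω
  rw [← hωk, ← hZ, ← hω]
  exact sum_congr rfl fun t ht => by rw [min_deathState (mem_Icc.mp ht).2, hy t ht]

theorem util_sub_eq [IsProbabilityMeasure μ] (hτmeas : Measurable τ) (hτpos : ∀ ω, 0 < τ ω)
    (hℋ : ∀ t, ℋ t = MeasurableSpace.comap (deathState t τ) inferInstance)
    (hlaw : IsDeathLaw T (fun k => μ.real (deathState T τ ⁻¹' {k})) q p)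
    (hαβ : IsTailAversion T α β) (hT : 1 ≤ T) (hh : IsPremiumRecursion T β z q p h)
    (hB : ∀ t ∈ Icc 1 T, 0 < B t) (hu : ∀ t x, u t x = 1 / α t * (1 - exp (-(α t) * x)))
    (hZ : ∀ ω, Z ω = z (deathState T τ ω)) (a : ℝ) :
    Util μ T ℋ u (fun t _ => B t) (fun ω => a - Z ω) =
      1 / β 1 * (1 - exp (-(β 1 * (a - log (h 0))))) := by
  refine IsGreatest.csSup_eq
    ⟨⟨_, isAlloc_optimalAlloc hτpos hℋ hαβ hT hh.last hB hZ a, ?_⟩, ?_⟩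
  · rw [allocVal_eq_sum_sum hτmeas hτpos (B := B) (x := optimalAlloc α β z h a)
      fun t ht ω => mul_div_cancel_left₀ _ (hB t ht).ne',
      sum_sum_utility_optimalAlloc hlaw hαβ hT hh hu]
  · rintro _ ⟨Y, hY, rfl⟩
    exact allocVal_le_of_isAlloc hτmeas hτpos hℋ hlaw hαβ hT hh hu hZ hY

end Utility

theorem insurance_indifference_premium_general
    {Ω : Type*} [mΩ : MeasurableSpace Ω] (μ : Measure Ω) [IsProbabilityMeasure μ]
    (T : ℕ) (hT : 1 ≤ T)
    (τ : Ω → ℝ) (hτmeas : Measurable τ) (hτpos : ∀ ω, 0 < τ ω)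
    (D : ℕ → Ω → ℝ) (hD : ∀ t ω, D t ω = if τ ω ≤ (t : ℝ) then 1 else 0)
    (ℋ : ℕ → MeasurableSpace Ω)
    (hℋ : ∀ t, ℋ t =
      ⨆ s ∈ Finset.range (t + 1), MeasurableSpace.comap (D s) (inferInstance : MeasurableSpace ℝ))
    (q p : ℕ → ℝ)
    (hsurv : ∀ t, t < T → 0 < μ {ω | (t : ℝ) < τ ω})
    (hq : ∀ t, t < T → q t =
      (μ {ω | (t : ℝ) < τ ω ∧ τ ω ≤ (t : ℝ) + 1}).toReal / (μ {ω | (t : ℝ) < τ ω}).toReal)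
    (hp : ∀ t, t < T → p t = 1 - q t)
    (α β : ℕ → ℝ) (hα : ∀ t ∈ Finset.Icc 1 T, 0 < α t)
    (hβ : ∀ t ∈ Finset.Icc 1 T, 1 / β t = ∑ k ∈ Finset.Icc t T, 1 / α k)
    -- condition (R): deterministic, nonnegative interest rates
    (r : ℕ → ℝ) (hr_nonneg : ∀ t ∈ Finset.Icc 1 T, 0 ≤ r t)
    (B : ℕ → ℝ) (hB : ∀ t, B t = ∏ k ∈ Finset.Icc 1 t, (1 + r k))
    -- exponential utility
    (u : ℕ → ℝ → ℝ)
    (hu : ∀ t x, u t x = (1 / α t) * (1 - Real.exp (-(α t) * x)))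
    (z : ℕ → ℝ) (Z : Ω → ℝ)
    (hZ : ∀ ω, Z ω =
      (∑ t ∈ Finset.Icc 1 T, if (t : ℝ) - 1 < τ ω ∧ τ ω ≤ (t : ℝ) then z t else 0) +
      (if (T : ℝ) < τ ω then z (T + 1) else 0))
    (h : ℕ → ℝ)
    (hhT : h T = Real.exp (z (T + 1)))
    (hhstep : ∀ t ∈ Finset.Icc 1 T,
      h (t - 1) = (Real.exp (β t * z t) * q (t - 1) + (h t) ^ (β t) * p (t - 1)) ^ (1 / β t))
    (w H : ℝ)
    (hH : Util μ T ℋ u (fun t _ => B t) (fun ω => w + H - Z ω) =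
      Util μ T ℋ u (fun t _ => B t) (fun _ => w)) :
    H = Real.log (h 0) := by
  have hℋ' : ∀ t, ℋ t = MeasurableSpace.comap (deathState t τ) inferInstance := fun t =>
    (hℋ t).trans (iSup_comap_eq_comap_deathState hD t)
  have hlaw := isDeathLaw_deathState hτmeas hτpos hsurv hq hp
  have hαβ : IsTailAversion T α β := ⟨hα, hβ⟩
  have hBpos : ∀ t ∈ Icc 1 T, 0 < B t := fun t ht => by
    rw [hB]
    exact prod_pos fun k hk => by linarith [hr_nonneg k (by simp at hk ht ⊢; omega)]
  have hinsured := util_sub_eq hτmeas hτpos hℋ' hlaw hαβ hT ⟨hhT, hhstep⟩ hBpos hu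
    (fun ω => (hZ ω).trans (sum_ite_add_ite_eq_deathState (hτpos ω) z)) (w + H)
  have huninsured := util_sub_eq (z := 0) (h := 1) (Z := 0) hτmeas hτpos hℋ' hlaw hαβ hT
    ⟨by simp, fun t ht => by simp [hlaw.q_add_p (by simp at ht; omega : t - 1 < T)]⟩ hBpos hu
    (fun _ => rfl) w
  simp only [Pi.zero_apply, sub_zero, Pi.one_apply, log_one] at huninsured
  have hβ1 : β 1 ≠ 0 := (hαβ.beta_pos (by simp [hT])).ne'
  rw [hinsured, huninsured, mul_right_inj' (one_div_ne_zero hβ1), sub_right_inj, exp_eq_exp,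
    neg_inj, mul_right_inj' hβ1] at hH
  linarith

/-- Premium formula (Theorem 4.3(a)): under exponential utility, deterministic
interest rates (R) and the death-time filtration (F), the indifference price of
`Z = ∑_{t=1}^T z_t 1_{(t-1 < τ ≤ t)} + z_{T+1} 1_{(T < τ)}` is `H(Z) = log h₀`. -/
theorem insurance_indifference_premium
    {Ω : Type*} [mΩ : MeasurableSpace Ω] (μ : Measure Ω) [IsProbabilityMeasure μ]
    (T : ℕ) (hT : 1 ≤ T)
    (τ : Ω → ℝ) (hτmeas : Measurable τ) (hτpos : ∀ ω, 0 < τ ω)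
    (hτcont : ∀ s : ℝ, 0 ≤ s → μ {ω | τ ω = s} = 0)
    (D : ℕ → Ω → ℝ) (hD : ∀ t ω, D t ω = if τ ω ≤ (t : ℝ) then 1 else 0)
    (ℋ : ℕ → MeasurableSpace Ω)
    (hℋ : ∀ t, ℋ t =
      ⨆ s ∈ Finset.range (t + 1), MeasurableSpace.comap (D s) (inferInstance : MeasurableSpace ℝ))
    (q p : ℕ → ℝ)
    (hsurv : ∀ t, t < T → 0 < μ {ω | (t : ℝ) < τ ω})
    (hq : ∀ t, t < T → q t =
      (μ {ω | (t : ℝ) < τ ω ∧ τ ω ≤ (t : ℝ) + 1}).toReal / (μ {ω | (t : ℝ) < τ ω}).toReal)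
    (hp : ∀ t, t < T → p t = 1 - q t)
    (α β : ℕ → ℝ) (hα : ∀ t ∈ Finset.Icc 1 T, 0 < α t)
    (hβ : ∀ t ∈ Finset.Icc 1 T, 1 / β t = ∑ k ∈ Finset.Icc t T, 1 / α k)
    -- condition (R): deterministic, nonnegative interest rates
    (r : ℕ → ℝ) (hr_nonneg : ∀ t ∈ Finset.Icc 1 T, 0 ≤ r t)
    (B : ℕ → ℝ) (hB : ∀ t, B t = ∏ k ∈ Finset.Icc 1 t, (1 + r k))
    -- exponential utility
    (u : ℕ → ℝ → ℝ)
    (hu : ∀ t x, u t x = (1 / α t) * (1 - Real.exp (-(α t) * x)))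
    (z : ℕ → ℝ) (Z : Ω → ℝ)
    (hZ : ∀ ω, Z ω =
      (∑ t ∈ Finset.Icc 1 T, if (t : ℝ) - 1 < τ ω ∧ τ ω ≤ (t : ℝ) then z t else 0) +
      (if (T : ℝ) < τ ω then z (T + 1) else 0))
    (h : ℕ → ℝ)
    (hhT : h T = Real.exp (z (T + 1)))
    (hhstep : ∀ t ∈ Finset.Icc 1 T,
      h (t - 1) = (Real.exp (β t * z t) * q (t - 1) + (h t) ^ (β t) * p (t - 1)) ^ (1 / β t))
    (w H : ℝ)
    (hH : Util μ T ℋ u (fun t _ => B t) (fun ω => w + H - Z ω) =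
      Util μ T ℋ u (fun t _ => B t) (fun _ => w)) :
    H = Real.log (h 0) :=
  insurance_indifference_premium_general (mΩ := mΩ) μ T hT τ hτmeas hτpos D hD ℋ hℋ q p hsurv hq hp
    α β hα hβ r hr_nonneg B hB u hu z Z hZ h hhT hhstep w H hH
end
end

section
/- Behavior of the exponential-utility premium in the risk aversion parameter: assume additionally 0 < q_t < 1 for t = 0,...,T−1, let Z ∈ L^∞ have the representation Z = ∑_{t=1}^T z_t 1_{(t−1 < τ ≤ t)} + z_{T+1} 1_{(T < τ)}, write H_α(Z) for the indifference price under exponential utility with parameter α ∈ (0,∞)^T, and set H_∞(Z) := max{z_1,...,z_{T+1}}. Then: (a) E[Z] ≤ H_α(Z) ≤ H_∞(Z) for all α ∈ (0,∞)^T; (b) H_α(Z) → E[Z] as α_t → 0+ for every t ∈ 𝕋; (c) H_α(Z) → H_∞(Z) as α_t → ∞ for every t ∈ 𝕋. -/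
open MeasureTheory Finset Real

noncomputable section

/-!
With `1 / β = ∑_t 1 / α_t`, Jensen's inequality (for `u_{α_t}` on a set `A`, then for the concave
`1 - e^{-x}` across the dates with weights `β / α_t`) gives
`U(W) ≤ (1 - P(A)) / β + P(A) u_β(E[W | A])`, while the deterministic split `β s / α_t` attains
`u_β(s)`; in particular `U(s) = u_β(s)` for constants. Hence, with `A = Ω`,
`u_β(w) = U(w + H - Z) ≤ u_β(w + H - E[Z])`, so `E[Z] ≤ H`, and comparing `w + H - Z` with the
constant `w + H - H_∞` gives `H ≤ H_∞`. Taking for `A` the period (or the survival event) on which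
`Z = H_∞`, of positive probability since `0 < q_t < 1`, gives `H_∞ - H ≤ log (1 / P(A)) / β`,
which vanishes as all `α_t → ∞`. Finally, paying all of `w + H - Z` at `T` shows
`E[u_{α_T}(w + H - Z)] ≤ U(w) ≤ w`, i.e. `α_T (w + H) ≤ cgf_Z(α_T) - log (1 - α_T w)`, and this
difference quotient tends to `E[Z] + w` as `α_T → 0`.
-/

def expUtility (a x : ℝ) : ℝ := 1 / a * (1 - exp (-a * x))

/-- The paper's `β_1` when `I = 𝕋`. -/
def aggRiskAversion (I : Finset ℕ) (a : ℕ → ℝ) : ℝ := (∑ t ∈ I, 1 / a t)⁻¹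

section ExpUtility

variable {a : ℝ}

lemma continuous_expUtility (a : ℝ) : Continuous (expUtility a) := by
  unfold expUtility; fun_prop

@[simp]
lemma expUtility_zero : expUtility a 0 = 0 := by
  simp [expUtility]

lemma expUtility_strictMono (ha : 0 < a) : StrictMono (expUtility a) := by
  intro x y hxy
  have : exp (-a * y) < exp (-a * x) := exp_lt_exp.mpr (by nlinarith)
  unfold expUtility
  gcongr

lemma expUtility_le_inv (ha : 0 < a) (x : ℝ) : expUtility a x ≤ 1 / a := by
  unfold expUtility
  have := exp_pos (-a * x)
  have : 0 < 1 / a := by positivity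
  nlinarith

lemma expUtility_le_self (ha : 0 < a) (x : ℝ) : expUtility a x ≤ x := by
  have h := add_one_le_exp (-a * x)
  unfold expUtility
  rw [div_mul_eq_mul_div, div_le_iff₀ ha]
  nlinarith

lemma expUtility_eq_one_div_mul (x : ℝ) : expUtility a x = 1 / a * expUtility 1 (a * x) := by
  simp [expUtility]

lemma concaveOn_expUtility (ha : 0 < a) : ConcaveOn ℝ Set.univ (expUtility a) := by
  have h := (concaveOn_const (1 / a) convex_univ).sub
    ((convexOn_exp.comp_linearMap ((-a) • LinearMap.id)).smul (one_div_nonneg.mpr ha.le))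
  refine h.congr fun x _ => ?_
  simp only [LinearMap.coe_smul, LinearMap.id_coe, neg_smul, Function.comp_apply, Pi.neg_apply,
    Pi.smul_apply, id_eq, smul_eq_mul, Pi.sub_apply, expUtility, neg_mul]
  ring

lemma expUtility_div (ha : 0 < a) (c : ℝ) :
    expUtility a (c / a) = 1 / a * (1 - exp (-c)) := by
  unfold expUtility; congr 3; field_simp

lemma sub_le_log_inv_div_of_expUtility_le {ρ x y : ℝ} (ha : 0 < a) (hρ : 0 < ρ)
    (h : expUtility a x ≤ (1 - ρ) / a + ρ * expUtility a y) : x - y ≤ log ρ⁻¹ / a := by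
  have hexp : ρ * exp (-a * y) ≤ exp (-a * x) := by
    have hdiff : expUtility a x - ((1 - ρ) / a + ρ * expUtility a y) =
        1 / a * (ρ * exp (-a * y) - exp (-a * x)) := by
      unfold expUtility; ring
    by_contra hc
    have := mul_pos (one_div_pos.mpr ha) (sub_pos.mpr (not_le.mp hc))
    linarith
  have hlog : log ρ + -a * y ≤ -a * x := by
    rw [← log_exp (-a * x), ← log_exp (-a * y), ← log_mul hρ.ne' (exp_pos _).ne']
    exact log_le_log (by positivity) hexp
  rw [log_inv, le_div_iff₀ ha]
  linarith

end ExpUtility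

section Aggregation

variable {I : Finset ℕ} {a : ℕ → ℝ}

lemma aggRiskAversion_pos (hI : I.Nonempty) (ha : ∀ t ∈ I, 0 < a t) :
    0 < aggRiskAversion I a :=
  inv_pos.mpr (sum_pos (fun t ht => one_div_pos.mpr (ha t ht)) hI)

lemma one_div_aggRiskAversion : 1 / aggRiskAversion I a = ∑ t ∈ I, 1 / a t := by
  rw [aggRiskAversion, one_div, inv_inv]

lemma sum_mul_div_aggRiskAversion (hI : I.Nonempty) (ha : ∀ t ∈ I, 0 < a t) (s : ℝ) :
    ∑ t ∈ I, aggRiskAversion I a * s / a t = s := by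
  have hβ := aggRiskAversion_pos hI ha
  simp_rw [div_eq_mul_one_div (aggRiskAversion I a * s)]
  rw [← mul_sum, ← one_div_aggRiskAversion]
  field_simp

/-- Jensen's inequality for `expUtility 1` with the weights `β / a t`. -/
lemma sum_expUtility_le (hI : I.Nonempty) (ha : ∀ t ∈ I, 0 < a t) (m : ℕ → ℝ) :
    ∑ t ∈ I, expUtility (a t) (m t) ≤ expUtility (aggRiskAversion I a) (∑ t ∈ I, m t) := by
  set β := aggRiskAversion I a
  have hβ : 0 < β := aggRiskAversion_pos hI ha
  have hw : ∑ t ∈ I, β / a t = 1 := by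
    simpa using sum_mul_div_aggRiskAversion hI ha 1
  have hJ := (concaveOn_expUtility one_pos).le_map_sum (t := I) (w := fun t => β / a t)
    (p := fun t => a t * m t) (fun t ht => (div_pos hβ (ha t ht)).le) hw (fun _ _ => trivial)
  have hl : ∑ t ∈ I, expUtility (a t) (m t) =
      1 / β * ∑ t ∈ I, (β / a t) • expUtility 1 (a t * m t) := by
    rw [mul_sum]
    refine sum_congr rfl fun t ht => ?_
    rw [expUtility_eq_one_div_mul, smul_eq_mul]
    field_simp
  have hr : ∑ t ∈ I, (β / a t) • (a t * m t) = β * ∑ t ∈ I, m t := by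
    rw [mul_sum]
    refine sum_congr rfl fun t ht => ?_
    have := (ha t ht).ne'
    rw [smul_eq_mul]; field_simp
  rw [hl, expUtility_eq_one_div_mul (a := β), ← hr]
  exact mul_le_mul_of_nonneg_left hJ (one_div_nonneg.mpr hβ.le)

lemma sum_expUtility_mul_div (ha : ∀ t ∈ I, 0 < a t) (s : ℝ) :
    ∑ t ∈ I, expUtility (a t) (aggRiskAversion I a * s / a t) =
      expUtility (aggRiskAversion I a) s := by
  rw [sum_congr rfl fun t ht => expUtility_div (ha t ht) _, ← sum_mul,
    ← one_div_aggRiskAversion, expUtility, neg_mul]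

lemma div_aggRiskAversion_lt {L ε : ℝ} (hI : I.Nonempty) (hL : 0 ≤ L) (hε : 0 < ε)
    (ha : ∀ t ∈ I, I.card * (L + 1) / ε < a t) : L / aggRiskAversion I a < ε := by
  have hK : 0 < I.card * (L + 1) / ε := by
    have := hI.card_pos
    positivity
  have hS : 1 / aggRiskAversion I a ≤ ε / (L + 1) := by
    calc 1 / aggRiskAversion I a = ∑ t ∈ I, 1 / a t := one_div_aggRiskAversion
      _ ≤ ∑ _t ∈ I, 1 / (I.card * (L + 1) / ε) :=
        sum_le_sum fun t ht => one_div_le_one_div_of_le hK (ha t ht).le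
      _ = ε / (L + 1) := by
        rw [sum_const, nsmul_eq_mul]
        field_simp [hI.card_pos.ne']
  calc L / aggRiskAversion I a = L * (1 / aggRiskAversion I a) := by ring
    _ ≤ L * (ε / (L + 1)) := by gcongr
    _ < ε := by
      rw [mul_div_assoc', div_lt_iff₀ (by linarith)]
      nlinarith

end Aggregation

section UtilityFunctional

variable {Ω : Type*} [mΩ : MeasurableSpace Ω] {μ : Measure Ω}

lemma integrable_expUtility_comp [IsFiniteMeasure μ] {a C : ℝ} (ha : 0 < a) {g : Ω → ℝ}
    (hg : AEMeasurable g μ) (hC : ∀ᵐ ω ∂μ, |g ω| ≤ C) :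
    Integrable (fun ω => expUtility a (g ω)) μ :=
  .of_mem_Icc (expUtility a (-C)) (1 / a)
    ((continuous_expUtility a).measurable.comp_aemeasurable hg)
    (hC.mono fun _ hω =>
      ⟨(expUtility_strictMono ha).monotone (neg_le_of_abs_le hω), expUtility_le_inv ha _⟩)

lemma setIntegral_expUtility_le [IsFiniteMeasure μ] {a : ℝ} (ha : 0 < a) {g : Ω → ℝ}
    {A : Set Ω} (hA : 0 < μ.real A) (hg : IntegrableOn g A μ)
    (hug : IntegrableOn (fun ω => expUtility a (g ω)) A μ) :
    ∫ ω in A, expUtility a (g ω) ∂μ ≤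
      μ.real A * expUtility a ((∫ ω in A, g ω ∂μ) / μ.real A) := by
  have hJ := (concaveOn_expUtility ha).le_map_set_average (continuous_expUtility a).continuousOn
    isClosed_univ ((measureReal_ne_zero_iff).mp hA.ne') (measure_ne_top μ A) (by simp) hg hug
  rwa [setAverage_eq, setAverage_eq, smul_eq_mul, smul_eq_mul, inv_mul_eq_div, inv_mul_eq_div,
    div_le_iff₀' hA] at hJ

lemma integral_expUtility_le [IsProbabilityMeasure μ] {a : ℝ} (ha : 0 < a) {g : Ω → ℝ}
    (hg : Integrable g μ) (hug : Integrable (fun ω => expUtility a (g ω)) μ)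
    {A : Set Ω} (hA : MeasurableSet A) (hA0 : 0 < μ.real A) :
    ∫ ω, expUtility a (g ω) ∂μ ≤
      (1 - μ.real A) / a + μ.real A * expUtility a ((∫ ω in A, g ω ∂μ) / μ.real A) := by
  have hAc : ∫ ω in Aᶜ, expUtility a (g ω) ∂μ ≤ (1 - μ.real A) / a :=
    calc ∫ ω in Aᶜ, expUtility a (g ω) ∂μ ≤ ∫ _ in Aᶜ, 1 / a ∂μ :=
          setIntegral_mono_on hug.integrableOn (integrableOn_const (measure_ne_top _ _))
            hA.compl fun _ _ => expUtility_le_inv ha _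
      _ = (1 - μ.real A) / a := by
          rw [setIntegral_const, probReal_compl_eq_one_sub hA, smul_eq_mul, mul_one_div]
  rw [← integral_add_compl hA hug]
  linarith [setIntegral_expUtility_le ha hA0 hg.integrableOn hug.integrableOn]

lemma ae_abs_sub_le {Z : Ω → ℝ} {M : ℝ} (hZb : ∀ ω, |Z ω| ≤ M) (c : ℝ) :
    ∀ᵐ ω ∂μ, |c - Z ω| ≤ |c| + M :=
  ae_of_all _ fun ω => (abs_sub _ _).trans (by gcongr; exact hZb ω)

end UtilityFunctional

section RemainderAlloc

variable {Ω : Type*} {T : ℕ} {B : ℕ → ℝ} {W : Ω → ℝ}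

def remainderAlloc (T : ℕ) (B : ℕ → ℝ) (x : ℕ → ℝ) (W : Ω → ℝ) : ℕ → Ω → ℝ :=
  fun t ω => if t = T then B T * (W ω - ∑ s ∈ Ico 1 T, x s) else B t * x t

lemma remainderAlloc_self (x : ℕ → ℝ) :
    remainderAlloc T B x W T = fun ω => B T * (W ω - ∑ s ∈ Ico 1 T, x s) := by
  ext; simp [remainderAlloc]

lemma remainderAlloc_of_ne (x : ℕ → ℝ) {t : ℕ} (ht : t ≠ T) :
    remainderAlloc T B x W t = fun _ => B t * x t := by
  ext; simp [remainderAlloc, ht]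

end RemainderAlloc

section Allocations

variable {Ω : Type*} [mΩ : MeasurableSpace Ω] {μ : Measure Ω} {T : ℕ}
  {ℋ : ℕ → MeasurableSpace Ω} {B : ℕ → ℝ} {W : Ω → ℝ}

lemma IsAlloc.measurable_div (hle : ∀ t, ℋ t ≤ mΩ) {Y : ℕ → Ω → ℝ}
    (hY : IsAlloc μ T ℋ (fun t _ => B t) W Y) {t : ℕ} (ht : t ∈ Icc 1 T) :
    Measurable fun ω => Y t ω / B t :=
  ((hY.1 t ht).1.mono (hle t) le_rfl).div_const _

lemma IsAlloc.exists_bound_div {Y : ℕ → Ω → ℝ} (hY : IsAlloc μ T ℋ (fun t _ => B t) W Y)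
    {t : ℕ} (ht : t ∈ Icc 1 T) : ∃ C, ∀ᵐ ω ∂μ, |Y t ω / B t| ≤ C := by
  obtain ⟨C, hC⟩ := (hY.1 t ht).2
  exact ⟨C / |B t|, hC.mono fun ω hω => by rw [abs_div]; gcongr⟩

lemma allocVal_expUtility_le_sum [IsProbabilityMeasure μ] {a : ℕ → ℝ}
    (ha : ∀ t ∈ Icc 1 T, 0 < a t) (Y : ℕ → Ω → ℝ) :
    allocVal μ T (fun t => expUtility (a t)) (fun t _ => B t) Y ≤ ∑ t ∈ Icc 1 T, 1 / a t := by
  refine sum_le_sum fun t ht => ?_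
  by_cases hi : Integrable (fun ω => expUtility (a t) (Y t ω / B t)) μ
  · simpa using integral_mono hi (integrable_const (1 / a t)) fun _ => expUtility_le_inv (ha t ht) _
  · rw [integral_undef hi]
    exact (one_div_pos.mpr (ha t ht)).le

lemma allocVal_expUtility_le [IsProbabilityMeasure μ] (hT : 1 ≤ T) (hle : ∀ t, ℋ t ≤ mΩ)
    {a : ℕ → ℝ} (ha : ∀ t ∈ Icc 1 T, 0 < a t) {Y : ℕ → Ω → ℝ}
    (hY : IsAlloc μ T ℋ (fun t _ => B t) W Y) {A : Set Ω} (hA : MeasurableSet A)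
    (hA0 : 0 < μ.real A) :
    allocVal μ T (fun t => expUtility (a t)) (fun t _ => B t) Y ≤
      (1 - μ.real A) / aggRiskAversion (Icc 1 T) a +
        μ.real A * expUtility (aggRiskAversion (Icc 1 T) a) ((∫ ω in A, W ω ∂μ) / μ.real A) := by
  set ρ := μ.real A
  have hint : ∀ t ∈ Icc 1 T, Integrable (fun ω => Y t ω / B t) μ ∧
      Integrable (fun ω => expUtility (a t) (Y t ω / B t)) μ := fun t ht => by
    obtain ⟨C, hC⟩ := hY.exists_bound_div ht
    have hm := (hY.measurable_div hle ht).aemeasurable (μ := μ)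
    exact ⟨.of_bound hm.aestronglyMeasurable C (hC.mono fun _ h => by rwa [Real.norm_eq_abs]),
      integrable_expUtility_comp (ha t ht) hm hC⟩
  have hmean : ∑ t ∈ Icc 1 T, (∫ ω in A, Y t ω / B t ∂μ) / ρ = (∫ ω in A, W ω ∂μ) / ρ := by
    rw [← sum_div, ← integral_finsetSum _ fun t ht => (hint t ht).1.integrableOn,
      integral_congr_ae (ae_restrict_of_ae hY.2)]
  calc allocVal μ T (fun t => expUtility (a t)) (fun t _ => B t) Y
      ≤ ∑ t ∈ Icc 1 T, ((1 - ρ) / a t +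
          ρ * expUtility (a t) ((∫ ω in A, Y t ω / B t ∂μ) / ρ)) :=
        sum_le_sum fun t ht => integral_expUtility_le (ha t ht) (hint t ht).1 (hint t ht).2 hA hA0
    _ = (1 - ρ) / aggRiskAversion (Icc 1 T) a +
          ρ * ∑ t ∈ Icc 1 T, expUtility (a t) ((∫ ω in A, Y t ω / B t ∂μ) / ρ) := by
        simp_rw [sum_add_distrib, ← mul_sum, div_eq_mul_one_div (1 - ρ), ← mul_sum,
          one_div_aggRiskAversion]
    _ ≤ _ := by
        rw [← hmean]
        gcongr
        exact sum_expUtility_le (nonempty_Icc.mpr hT) ha _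

lemma isAlloc_remainderAlloc (hT : 1 ≤ T) (hB : ∀ t ∈ Icc 1 T, B t ≠ 0)
    (hW : Measurable[ℋ T] W) {C : ℝ} (hC : ∀ᵐ ω ∂μ, |W ω| ≤ C) (x : ℕ → ℝ) :
    IsAlloc μ T ℋ (fun t _ => B t) W (remainderAlloc T B x W) := by
  refine ⟨fun t ht => ?_, ae_of_all _ fun ω => ?_⟩
  · by_cases h : t = T
    · subst h
      rw [remainderAlloc_self]
      refine ⟨(hW.sub_const _).const_mul _, |B t| * (C + |∑ s ∈ Ico 1 t, x s|),
        hC.mono fun ω hω => ?_⟩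
      rw [abs_mul]
      gcongr
      exact (abs_sub _ _).trans (by gcongr)
    · rw [remainderAlloc_of_ne x h]
      exact ⟨measurable_const, |B t * x t|, ae_of_all _ fun _ => le_rfl⟩
  · have hT' : T ∈ Icc 1 T := mem_Icc.mpr ⟨hT, le_rfl⟩
    rw [← sum_Ico_add_eq_sum_Icc hT, remainderAlloc_self, sum_congr rfl fun t ht => by
      rw [remainderAlloc_of_ne x (mem_Ico.mp ht).2.ne,
        mul_div_cancel_left₀ _ (hB t (Ico_subset_Icc_self ht))], mul_div_cancel_left₀ _ (hB T hT')]
    ring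

lemma allocVal_remainderAlloc [IsProbabilityMeasure μ] (hT : 1 ≤ T)
    (hB : ∀ t ∈ Icc 1 T, B t ≠ 0) (u : ℕ → ℝ → ℝ) (x : ℕ → ℝ) (W : Ω → ℝ) :
    allocVal μ T u (fun t _ => B t) (remainderAlloc T B x W) =
      ∑ t ∈ Ico 1 T, u t (x t) + ∫ ω, u T (W ω - ∑ s ∈ Ico 1 T, x s) ∂μ := by
  have hT' : T ∈ Icc 1 T := mem_Icc.mpr ⟨hT, le_rfl⟩
  rw [allocVal, ← sum_Ico_add_eq_sum_Icc hT, remainderAlloc_self]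
  simp only [mul_div_cancel_left₀ _ (hB T hT')]
  congr 1
  refine sum_congr rfl fun t ht => ?_
  rw [remainderAlloc_of_ne x (mem_Ico.mp ht).2.ne]
  simp [mul_div_cancel_left₀ _ (hB t (Ico_subset_Icc_self ht))]

end Allocations

section UtilityBounds

variable {Ω : Type*} [mΩ : MeasurableSpace Ω] {μ : Measure Ω} [IsProbabilityMeasure μ] {T : ℕ}
  {ℋ : ℕ → MeasurableSpace Ω} {B : ℕ → ℝ} {a : ℕ → ℝ} {W : Ω → ℝ}

lemma allocVal_le_util (ha : ∀ t ∈ Icc 1 T, 0 < a t) {Y : ℕ → Ω → ℝ}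
    (hY : IsAlloc μ T ℋ (fun t _ => B t) W Y) :
    allocVal μ T (fun t => expUtility (a t)) (fun t _ => B t) Y ≤
      Util μ T ℋ (fun t => expUtility (a t)) (fun t _ => B t) W :=
  le_csSup ⟨_, fun _ ⟨Y', _, hs⟩ => hs ▸ allocVal_expUtility_le_sum ha Y'⟩ ⟨Y, hY, rfl⟩

lemma util_le (hT : 1 ≤ T) (hle : ∀ t, ℋ t ≤ mΩ) (ha : ∀ t ∈ Icc 1 T, 0 < a t)
    (hB : ∀ t ∈ Icc 1 T, B t ≠ 0) (hW : Measurable[ℋ T] W) {C : ℝ} (hC : ∀ᵐ ω ∂μ, |W ω| ≤ C)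
    {A : Set Ω} (hA : MeasurableSet A) (hA0 : 0 < μ.real A) :
    Util μ T ℋ (fun t => expUtility (a t)) (fun t _ => B t) W ≤
      (1 - μ.real A) / aggRiskAversion (Icc 1 T) a +
        μ.real A * expUtility (aggRiskAversion (Icc 1 T) a) ((∫ ω in A, W ω ∂μ) / μ.real A) :=
  csSup_le ⟨_, _, isAlloc_remainderAlloc hT hB hW hC 0, rfl⟩ fun _ ⟨_, hY, hs⟩ =>
    hs ▸ allocVal_expUtility_le hT hle ha hY hA hA0

lemma util_le_expUtility_integral (hT : 1 ≤ T) (hle : ∀ t, ℋ t ≤ mΩ)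
    (ha : ∀ t ∈ Icc 1 T, 0 < a t) (hB : ∀ t ∈ Icc 1 T, B t ≠ 0) (hW : Measurable[ℋ T] W)
    {C : ℝ} (hC : ∀ᵐ ω ∂μ, |W ω| ≤ C) :
    Util μ T ℋ (fun t => expUtility (a t)) (fun t _ => B t) W ≤
      expUtility (aggRiskAversion (Icc 1 T) a) (∫ ω, W ω ∂μ) := by
  simpa using util_le hT hle ha hB hW hC MeasurableSet.univ (by simp)

lemma expUtility_le_util_of_le (hT : 1 ≤ T) (hle : ∀ t, ℋ t ≤ mΩ) (ha : ∀ t ∈ Icc 1 T, 0 < a t)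
    (hB : ∀ t ∈ Icc 1 T, B t ≠ 0) (hW : Measurable[ℋ T] W) {C : ℝ} (hC : ∀ᵐ ω ∂μ, |W ω| ≤ C)
    {c : ℝ} (hcW : ∀ ω, c ≤ W ω) :
    expUtility (aggRiskAversion (Icc 1 T) a) c ≤
      Util μ T ℋ (fun t => expUtility (a t)) (fun t _ => B t) W := by
  set x : ℕ → ℝ := fun t => aggRiskAversion (Icc 1 T) a * c / a t
  have hT' : T ∈ Icc 1 T := mem_Icc.mpr ⟨hT, le_rfl⟩
  have hxT : c - ∑ s ∈ Ico 1 T, x s = x T := by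
    rw [← sum_mul_div_aggRiskAversion (nonempty_Icc.mpr hT) ha c, ← sum_Ico_add_eq_sum_Icc hT]
    ring
  refine le_trans ?_ (allocVal_le_util ha (isAlloc_remainderAlloc hT hB hW hC x))
  rw [allocVal_remainderAlloc hT hB, ← sum_expUtility_mul_div ha, ← sum_Ico_add_eq_sum_Icc hT]
  gcongr
  calc expUtility (a T) (x T) = ∫ _, expUtility (a T) (c - ∑ s ∈ Ico 1 T, x s) ∂μ := by simp [hxT]
    _ ≤ ∫ ω, expUtility (a T) (W ω - ∑ s ∈ Ico 1 T, x s) ∂μ := by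
      refine integral_mono (integrable_const _) ?_ fun ω =>
        (expUtility_strictMono (ha T hT')).monotone (by linarith [hcW ω])
      refine integrable_expUtility_comp (ha T hT')
        ((hW.mono (hle T) le_rfl).sub_const _).aemeasurable (C := C + |∑ s ∈ Ico 1 T, x s|) ?_
      exact hC.mono fun ω hω => (abs_sub _ _).trans (by gcongr)

lemma util_const (hT : 1 ≤ T) (hle : ∀ t, ℋ t ≤ mΩ) (ha : ∀ t ∈ Icc 1 T, 0 < a t)
    (hB : ∀ t ∈ Icc 1 T, B t ≠ 0) (c : ℝ) :
    Util μ T ℋ (fun t => expUtility (a t)) (fun t _ => B t) (fun _ => c) =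
      expUtility (aggRiskAversion (Icc 1 T) a) c := by
  have hc : ∀ᵐ _ ∂μ, |c| ≤ |c| := ae_of_all _ fun _ => le_rfl
  refine le_antisymm ?_ (expUtility_le_util_of_le hT hle ha hB measurable_const hc fun _ => le_rfl)
  simpa using util_le_expUtility_integral hT hle ha hB measurable_const hc

lemma integral_expUtility_le_util (hT : 1 ≤ T) (ha : ∀ t ∈ Icc 1 T, 0 < a t)
    (hB : ∀ t ∈ Icc 1 T, B t ≠ 0) (hW : Measurable[ℋ T] W) {C : ℝ} (hC : ∀ᵐ ω ∂μ, |W ω| ≤ C) :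
    ∫ ω, expUtility (a T) (W ω) ∂μ ≤
      Util μ T ℋ (fun t => expUtility (a t)) (fun t _ => B t) W := by
  simpa [allocVal_remainderAlloc hT hB] using
    allocVal_le_util ha (isAlloc_remainderAlloc hT hB hW hC 0)

end UtilityBounds

section Premium

variable {Ω : Type*} [mΩ : MeasurableSpace Ω] {μ : Measure Ω} [IsProbabilityMeasure μ] {T : ℕ}
  {ℋ : ℕ → MeasurableSpace Ω} {B : ℕ → ℝ} {a : ℕ → ℝ} {Z : Ω → ℝ} {w H M : ℝ}

lemma integral_le_premium (hT : 1 ≤ T) (hle : ∀ t, ℋ t ≤ mΩ) (ha : ∀ t ∈ Icc 1 T, 0 < a t)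
    (hB : ∀ t ∈ Icc 1 T, B t ≠ 0) (hZ : Measurable[ℋ T] Z) (hZb : ∀ ω, |Z ω| ≤ M)
    (hH : Util μ T ℋ (fun t => expUtility (a t)) (fun t _ => B t) (fun ω => w + H - Z ω) =
      Util μ T ℋ (fun t => expUtility (a t)) (fun t _ => B t) (fun _ => w)) :
    ∫ ω, Z ω ∂μ ≤ H := by
  have hβ := aggRiskAversion_pos (nonempty_Icc.mpr hT) ha
  have hZi : Integrable Z μ :=
    .of_bound (hZ.mono (hle T) le_rfl).aestronglyMeasurable M (ae_of_all _ hZb)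
  have h := util_le_expUtility_integral hT hle ha hB (hZ.const_sub (w + H))
    (ae_abs_sub_le (μ := μ) hZb (w + H))
  rw [hH, util_const hT hle ha hB, integral_sub (integrable_const _) hZi, integral_const,
    probReal_univ, one_smul, (expUtility_strictMono hβ).le_iff_le] at h
  linarith

lemma premium_le_of_le (hT : 1 ≤ T) (hle : ∀ t, ℋ t ≤ mΩ) (ha : ∀ t ∈ Icc 1 T, 0 < a t)
    (hB : ∀ t ∈ Icc 1 T, B t ≠ 0) (hZ : Measurable[ℋ T] Z) (hZb : ∀ ω, |Z ω| ≤ M)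
    (hH : Util μ T ℋ (fun t => expUtility (a t)) (fun t _ => B t) (fun ω => w + H - Z ω) =
      Util μ T ℋ (fun t => expUtility (a t)) (fun t _ => B t) (fun _ => w))
    {c : ℝ} (hZc : ∀ ω, Z ω ≤ c) :
    H ≤ c := by
  have hβ := aggRiskAversion_pos (nonempty_Icc.mpr hT) ha
  have h := expUtility_le_util_of_le hT hle ha hB (hZ.const_sub (w + H))
    (ae_abs_sub_le (μ := μ) hZb (w + H)) (c := w + H - c) fun ω => by linarith [hZc ω]
  rw [hH, util_const hT hle ha hB, (expUtility_strictMono hβ).le_iff_le] at h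
  linarith

lemma integral_expUtility_premium_le (hT : 1 ≤ T) (hle : ∀ t, ℋ t ≤ mΩ)
    (ha : ∀ t ∈ Icc 1 T, 0 < a t) (hB : ∀ t ∈ Icc 1 T, B t ≠ 0) (hZ : Measurable[ℋ T] Z)
    (hZb : ∀ ω, |Z ω| ≤ M)
    (hH : Util μ T ℋ (fun t => expUtility (a t)) (fun t _ => B t) (fun ω => w + H - Z ω) =
      Util μ T ℋ (fun t => expUtility (a t)) (fun t _ => B t) (fun _ => w)) :
    ∫ ω, expUtility (a T) (w + H - Z ω) ∂μ ≤ w :=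
  calc ∫ ω, expUtility (a T) (w + H - Z ω) ∂μ
      ≤ Util μ T ℋ (fun t => expUtility (a t)) (fun t _ => B t) (fun ω => w + H - Z ω) :=
        integral_expUtility_le_util hT ha hB (hZ.const_sub (w + H))
          (ae_abs_sub_le (μ := μ) hZb (w + H))
    _ = expUtility (aggRiskAversion (Icc 1 T) a) w := by rw [hH, util_const hT hle ha hB]
    _ ≤ w := expUtility_le_self (aggRiskAversion_pos (nonempty_Icc.mpr hT) ha) w

lemma sub_premium_le (hT : 1 ≤ T) (hle : ∀ t, ℋ t ≤ mΩ) (ha : ∀ t ∈ Icc 1 T, 0 < a t)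
    (hB : ∀ t ∈ Icc 1 T, B t ≠ 0) (hZ : Measurable[ℋ T] Z) (hZb : ∀ ω, |Z ω| ≤ M)
    (hH : Util μ T ℋ (fun t => expUtility (a t)) (fun t _ => B t) (fun ω => w + H - Z ω) =
      Util μ T ℋ (fun t => expUtility (a t)) (fun t _ => B t) (fun _ => w))
    {A : Set Ω} (hA : MeasurableSet A) (hA0 : 0 < μ.real A) {c : ℝ} (hAZ : ∀ ω ∈ A, Z ω = c) :
    c - H ≤ log (μ.real A)⁻¹ / aggRiskAversion (Icc 1 T) a := by
  have h := util_le hT hle ha hB (hZ.const_sub (w + H)) (ae_abs_sub_le (μ := μ) hZb (w + H)) hA hA0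
  rw [hH, util_const hT hle ha hB, setIntegral_congr_fun hA fun ω hω => by rw [hAZ ω hω],
    setIntegral_const, smul_eq_mul, mul_div_cancel_left₀ _ hA0.ne'] at h
  have := sub_le_log_inv_div_of_expUtility_le (aggRiskAversion_pos (nonempty_Icc.mpr hT) ha) hA0 h
  linarith

end Premium

section SmallRiskAversion

open Filter Topology ProbabilityTheory

variable {Ω : Type*} [MeasurableSpace Ω] {μ : Measure Ω} [IsProbabilityMeasure μ] {Z : Ω → ℝ}
  {M : ℝ}

lemma integrable_exp_mul_of_abs_le (hZ : AEMeasurable Z μ) (hZb : ∀ ω, |Z ω| ≤ M) (α : ℝ) :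
    Integrable (fun ω => exp (α * Z ω)) μ :=
  integrable_exp_mul_of_mem_Icc hZ (ae_of_all _ fun ω => abs_le.mp (hZb ω))

lemma hasDerivAt_cgf_zero_of_abs_le (hZ : AEMeasurable Z μ) (hZb : ∀ ω, |Z ω| ≤ M) :
    HasDerivAt (cgf Z μ) (∫ ω, Z ω ∂μ) 0 := by
  have h0 : (0 : ℝ) ∈ interior (integrableExpSet Z μ) := by
    have : integrableExpSet Z μ = Set.univ :=
      Set.eq_univ_of_forall (integrable_exp_mul_of_abs_le hZ hZb)
    rw [this, interior_univ]
    trivial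
  convert (hasDerivAt_mgf h0).log (by simp) using 1
  · rfl
  · simp

lemma integral_expUtility_const_sub {α : ℝ} (hint : Integrable (fun ω => exp (α * Z ω)) μ)
    (c : ℝ) :
    ∫ ω, expUtility α (c - Z ω) ∂μ = (1 - exp (-(α * c)) * mgf Z μ α) / α := by
  have h : ∀ ω, expUtility α (c - Z ω) = 1 / α - 1 / α * exp (-(α * c)) * exp (α * Z ω) := by
    intro ω
    rw [expUtility, mul_assoc, ← exp_add]
    ring_nf
  simp_rw [h]
  rw [integral_sub (integrable_const _) (hint.const_mul _), integral_const_mul, mgf,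
    integral_const, probReal_univ, one_smul]
  ring

/-- The hypothesis means `α c ≤ cgf α - log (1 - α w)`, a difference quotient at `0` with limit
`E[Z] + w`. -/
lemma eventually_lt_of_integral_expUtility_le (hZ : AEMeasurable Z μ) (hZb : ∀ ω, |Z ω| ≤ M)
    (w : ℝ) {ε : ℝ} (hε : 0 < ε) :
    ∀ᶠ α in 𝓝[>] 0, ∀ c, ∫ ω, expUtility α (c - Z ω) ∂μ ≤ w → c < w + ∫ ω, Z ω ∂μ + ε := by
  set φ : ℝ → ℝ := fun α => cgf Z μ α - log (1 - α * w)
  have hlog : HasDerivAt (fun α => log (1 - α * w)) (-w) 0 := by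
    simpa using (((hasDerivAt_id' (0 : ℝ)).mul_const w).const_sub 1).log (by simp)
  have hφ : HasDerivAt φ (∫ ω, Z ω ∂μ + w) 0 :=
    ((hasDerivAt_cgf_zero_of_abs_le hZ hZb).sub hlog).congr_deriv (sub_neg_eq_add _ _)
  have hslope : ∀ᶠ α in 𝓝[>] 0, α⁻¹ • (φ (0 + α) - φ 0) < ∫ ω, Z ω ∂μ + w + ε :=
    hφ.tendsto_slope_zero_right (Iio_mem_nhds (by linarith))
  have hpos : ∀ᶠ α in 𝓝[>] (0 : ℝ), 0 < 1 - α * w := by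
    refine nhdsWithin_le_nhds (ContinuousAt.eventually_lt continuousAt_const ?_ ?_)
    · fun_prop
    · simp
  filter_upwards [hslope, hpos, self_mem_nhdsWithin] with α hslope hpos (hα : 0 < α) c hc
  rw [integral_expUtility_const_sub (integrable_exp_mul_of_abs_le hZ hZb α),
    div_le_iff₀ hα] at hc
  have hlog : log (1 - α * w) ≤ -(α * c) + cgf Z μ α := by
    rw [← log_exp (-(α * c)), cgf,
      ← log_mul (exp_pos _).ne' (mgf_pos (integrable_exp_mul_of_abs_le hZ hZb α)).ne']
    exact log_le_log hpos (by linarith)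
  simp only [φ, zero_add, cgf_zero, zero_mul, sub_zero, log_one, smul_eq_mul] at hslope
  rw [inv_mul_lt_iff₀ hα] at hslope
  nlinarith

end SmallRiskAversion

def payoff (z : ℕ → ℝ) (T : ℕ) (x : ℝ) : ℝ :=
  (∑ t ∈ Icc 1 T, if (t : ℝ) - 1 < x ∧ x ≤ (t : ℝ) then z t else 0) +
    (if (T : ℝ) < x then z (T + 1) else 0)

section Payoff

variable {z : ℕ → ℝ} {T : ℕ} {x : ℝ}

lemma payoff_of_lt_of_le {t : ℕ} (ht : t < T) (hx₁ : (t : ℝ) < x) (hx₂ : x ≤ t + 1) :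
    payoff z T x = z (t + 1) := by
  have hxT : x ≤ T := hx₂.trans (by exact_mod_cast ht)
  rw [payoff, if_neg hxT.not_gt, add_zero,
    sum_eq_single_of_mem (t + 1) (mem_Icc.mpr ⟨by omega, by omega⟩)]
  · push_cast
    simp [hx₁, hx₂]
  · intro s _ hs
    rw [if_neg]
    rintro ⟨h₁, h₂⟩
    have : (s : ℝ) < t + 2 := by linarith
    have : (t : ℝ) < s := by linarith
    exact hs (by norm_cast at *; omega)

lemma payoff_of_lt (hx : (T : ℝ) < x) : payoff z T x = z (T + 1) := by
  rw [payoff, if_pos hx, sum_eq_zero fun t ht => if_neg ?_, zero_add]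
  rintro ⟨-, h⟩
  have : (t : ℝ) ≤ T := by exact_mod_cast (mem_Icc.mp ht).2
  linarith

lemma exists_payoff_eq (hx : 0 < x) : ∃ k ∈ Icc 1 (T + 1), payoff z T x = z k := by
  rcases le_or_gt x T with hxT | hxT
  · have hceil : 1 ≤ ⌈x⌉₊ := Nat.one_le_ceil_iff.mpr hx
    obtain ⟨t, ht⟩ : ∃ t, ⌈x⌉₊ = t + 1 := ⟨⌈x⌉₊ - 1, by omega⟩
    have hlt : (t : ℝ) < x := by
      have := Nat.ceil_lt_add_one hx.le
      rw [ht] at this; push_cast at this; linarith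
    have hle : x ≤ t + 1 := by exact_mod_cast ht ▸ Nat.le_ceil x
    have htT : t < T := by
      have := Nat.ceil_le.mpr hxT
      omega
    exact ⟨t + 1, mem_Icc.mpr ⟨by omega, by omega⟩, payoff_of_lt_of_le htT hlt hle⟩
  · exact ⟨T + 1, mem_Icc.mpr ⟨by omega, le_rfl⟩, payoff_of_lt hxT⟩

lemma abs_payoff_le (hx : 0 < x) : |payoff z T x| ≤ ∑ k ∈ Icc 1 (T + 1), |z k| := by
  obtain ⟨k, hk, hzk⟩ := exists_payoff_eq (z := z) hx
  exact hzk ▸ single_le_sum (fun k _ => abs_nonneg (z k)) hk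

lemma payoff_le_sup' (hx : 0 < x) :
    payoff z T x ≤ (Icc 1 (T + 1)).sup' (nonempty_Icc.mpr (by omega)) z := by
  obtain ⟨k, hk, hzk⟩ := exists_payoff_eq (z := z) hx
  exact hzk ▸ le_sup' z hk

lemma measurable_payoff_comp {Ω : Type*} {m : MeasurableSpace Ω} {τ : Ω → ℝ}
    (hτ : ∀ k ≤ T, MeasurableSet {ω | τ ω ≤ k}) (z : ℕ → ℝ) :
    Measurable fun ω => payoff z T (τ ω) := by
  refine (Finset.measurable_sum _ fun t ht => Measurable.ite ?_ measurable_const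
    measurable_const).add (Measurable.ite ?_ measurable_const measurable_const)
  · obtain ⟨s, rfl⟩ : ∃ s, t = s + 1 := ⟨t - 1, by have := (mem_Icc.mp ht).1; omega⟩
    have hs : s + 1 ≤ T := (mem_Icc.mp ht).2
    convert (hτ (s + 1) hs).diff (hτ s (by omega)) using 1
    ext ω
    simp only [Set.mem_ofPred_eq, Set.mem_sdiff, not_le]
    push_cast
    rw [add_sub_cancel_right, and_comm]
  · convert (hτ T le_rfl).compl using 1
    ext ω
    simp

end Payoff

section DefaultTime

variable {Ω : Type*} {τ : Ω → ℝ} {D : ℕ → Ω → ℝ} {ℋ : ℕ → MeasurableSpace Ω}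

lemma le_filtration_of_le (hℋ : ∀ t, ℋ t =
      ⨆ s ∈ range (t + 1), MeasurableSpace.comap (D s) (inferInstance : MeasurableSpace ℝ))
    {s t : ℕ} (hst : s ≤ t) :
    MeasurableSpace.comap (D s) (inferInstance : MeasurableSpace ℝ) ≤ ℋ t := by
  rw [hℋ t]
  exact le_iSup₂ (f := fun s (_ : s ∈ range (t + 1)) =>
    MeasurableSpace.comap (D s) (inferInstance : MeasurableSpace ℝ)) s (mem_range.mpr (by omega))

lemma measurableSet_le_filtration (hD : ∀ t ω, D t ω = if τ ω ≤ (t : ℝ) then 1 else 0)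
    (hℋ : ∀ t, ℋ t =
      ⨆ s ∈ range (t + 1), MeasurableSpace.comap (D s) (inferInstance : MeasurableSpace ℝ))
    {k t : ℕ} (hkt : k ≤ t) : MeasurableSet[ℋ t] {ω | τ ω ≤ k} := by
  have hset : {ω | τ ω ≤ k} = D k ⁻¹' {1} := by
    ext ω
    simp [hD]
  rw [hset]
  exact le_filtration_of_le hℋ hkt _ ⟨{1}, measurableSet_singleton 1, rfl⟩

variable [mΩ : MeasurableSpace Ω]

lemma filtration_le (hτ : Measurable τ) (hD : ∀ t ω, D t ω = if τ ω ≤ (t : ℝ) then 1 else 0)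
    (hℋ : ∀ t, ℋ t =
      ⨆ s ∈ range (t + 1), MeasurableSpace.comap (D s) (inferInstance : MeasurableSpace ℝ))
    (t : ℕ) : ℋ t ≤ mΩ := by
  rw [hℋ t]
  refine iSup₂_le fun s _ => measurable_iff_comap_le.mp ?_
  rw [funext (hD s)]
  exact Measurable.ite (measurableSet_le hτ measurable_const) measurable_const measurable_const

variable {μ : Measure Ω} [IsFiniteMeasure μ]

lemma measureReal_setOf_lt_pos {s : ℝ} (hsurv : 0 < μ {ω | s < τ ω})
    (hq : (μ {ω | s < τ ω ∧ τ ω ≤ s + 1}).toReal / (μ {ω | s < τ ω}).toReal < 1) :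
    0 < μ.real {ω | s + 1 < τ ω} := by
  have hsurv' : 0 < μ.real {ω | s < τ ω} := ENNReal.toReal_pos hsurv.ne' (measure_ne_top _ _)
  have hsplit : μ.real {ω | s < τ ω} ≤
      μ.real {ω | s < τ ω ∧ τ ω ≤ s + 1} + μ.real {ω | s + 1 < τ ω} := by
    refine (measureReal_mono (fun ω hω => ?_) (measure_ne_top _ _)).trans (measureReal_union_le _ _)
    by_cases h : τ ω ≤ s + 1
    · exact Or.inl ⟨hω, h⟩
    · exact Or.inr (not_le.mp h)
  change μ.real _ / μ.real _ < 1 at hq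
  rw [div_lt_one hsurv'] at hq
  linarith

lemma exists_atom_payoff_eq (hτ : Measurable τ) {T : ℕ} (hT : 1 ≤ T)
    (hsurv : ∀ t, t < T → 0 < μ {ω | (t : ℝ) < τ ω}) {q : ℕ → ℝ}
    (hq : ∀ t, t < T → q t =
      (μ {ω | (t : ℝ) < τ ω ∧ τ ω ≤ (t : ℝ) + 1}).toReal / (μ {ω | (t : ℝ) < τ ω}).toReal)
    (hq01 : ∀ t, t < T → 0 < q t ∧ q t < 1) (z : ℕ → ℝ) {b : ℕ} (hb : b ∈ Icc 1 (T + 1)) :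
    ∃ A, MeasurableSet A ∧ 0 < μ.real A ∧ ∀ ω ∈ A, payoff z T (τ ω) = z b := by
  obtain ⟨t, rfl⟩ : ∃ t, b = t + 1 := ⟨b - 1, by have := (mem_Icc.mp hb).1; omega⟩
  rcases (show t ≤ T by have := (mem_Icc.mp hb).2; omega).lt_or_eq with ht | rfl
  · refine ⟨{ω | (t : ℝ) < τ ω ∧ τ ω ≤ t + 1},
      (measurableSet_lt measurable_const hτ).inter (measurableSet_le hτ measurable_const), ?_,
      fun ω hω => payoff_of_lt_of_le ht hω.1 hω.2⟩
    have h := hq t ht ▸ (hq01 t ht).1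
    refine lt_of_le_of_ne measureReal_nonneg fun h0 => ?_
    change 0 < μ.real _ / μ.real _ at h
    rw [← h0, zero_div] at h
    exact h.false
  · refine ⟨{ω | (t : ℝ) < τ ω}, measurableSet_lt measurable_const hτ, ?_,
      fun ω hω => payoff_of_lt hω⟩
    have hcast : ((t - 1 : ℕ) : ℝ) + 1 = t := by rw [Nat.cast_sub hT]; ring
    have h := measureReal_setOf_lt_pos (hsurv (t - 1) (by omega))
      (hq (t - 1) (by omega) ▸ (hq01 (t - 1) (by omega)).2)
    rwa [hcast] at h

end DefaultTime

lemma prod_one_add_pos {r : ℕ → ℝ} {T t : ℕ} (hr : ∀ k ∈ Icc 1 T, 0 ≤ r k) (ht : t ≤ T) :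
    0 < ∏ k ∈ Icc 1 t, (1 + r k) :=
  prod_pos fun k hk => by linarith [hr k (Icc_subset_Icc_right ht hk)]

/-- Behavior of the exponential-utility premium in the risk aversion parameter
(Theorem 4.6 (a)-(c)): `E[Z] ≤ H_α(Z) ≤ H_∞(Z)`, with `H_α(Z) → E[Z]` as `α → 0+`
and `H_α(Z) → H_∞(Z)` as `α → ∞`. -/
theorem premium_risk_aversion_bounds_and_limits
    {Ω : Type*} [mΩ : MeasurableSpace Ω] (μ : Measure Ω) [IsProbabilityMeasure μ]
    (T : ℕ) (hT : 1 ≤ T)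
    (τ : Ω → ℝ) (hτmeas : Measurable τ) (hτpos : ∀ ω, 0 < τ ω)
    (D : ℕ → Ω → ℝ) (hD : ∀ t ω, D t ω = if τ ω ≤ (t : ℝ) then 1 else 0)
    (ℋ : ℕ → MeasurableSpace Ω)
    (hℋ : ∀ t, ℋ t =
      ⨆ s ∈ Finset.range (t + 1), MeasurableSpace.comap (D s) (inferInstance : MeasurableSpace ℝ))
    (q : ℕ → ℝ)
    (hsurv : ∀ t, t < T → 0 < μ {ω | (t : ℝ) < τ ω})
    (hq : ∀ t, t < T → q t =
      (μ {ω | (t : ℝ) < τ ω ∧ τ ω ≤ (t : ℝ) + 1}).toReal / (μ {ω | (t : ℝ) < τ ω}).toReal)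
    (hq01 : ∀ t, t < T → 0 < q t ∧ q t < 1)
    -- condition (R): deterministic, nonnegative interest rates
    (r : ℕ → ℝ) (hr_nonneg : ∀ t ∈ Finset.Icc 1 T, 0 ≤ r t)
    (B : ℕ → ℝ) (hB : ∀ t, B t = ∏ k ∈ Finset.Icc 1 t, (1 + r k))
    (z : ℕ → ℝ) (Z : Ω → ℝ)
    (hZ : ∀ ω, Z ω =
      (∑ t ∈ Finset.Icc 1 T, if (t : ℝ) - 1 < τ ω ∧ τ ω ≤ (t : ℝ) then z t else 0) +
      (if (T : ℝ) < τ ω then z (T + 1) else 0))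
    (w : ℝ) (Hfun : (ℕ → ℝ) → ℝ)
    -- `Hfun a` is the indifference price of `Z` for the exponential utility with
    -- risk aversion parameter `a ∈ (0,∞)^T`
    (hHfun : ∀ a : ℕ → ℝ, (∀ t ∈ Finset.Icc 1 T, 0 < a t) →
      Util μ T ℋ (fun t x => (1 / a t) * (1 - Real.exp (-(a t) * x))) (fun t _ => B t)
          (fun ω => w + Hfun a - Z ω) =
        Util μ T ℋ (fun t x => (1 / a t) * (1 - Real.exp (-(a t) * x))) (fun t _ => B t)
          (fun _ => w))
    (Hinf : ℝ)
    (hHinf : Hinf = (Finset.Icc 1 (T + 1)).sup' (Finset.nonempty_Icc.mpr (by omega)) z) :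
    (∀ a : ℕ → ℝ, (∀ t ∈ Finset.Icc 1 T, 0 < a t) →
      (∫ ω, Z ω ∂μ) ≤ Hfun a ∧ Hfun a ≤ Hinf) ∧
    (∀ ε > 0, ∃ δ > 0, ∀ a : ℕ → ℝ, (∀ t ∈ Finset.Icc 1 T, 0 < a t) →
      (∀ t ∈ Finset.Icc 1 T, a t < δ) → |Hfun a - ∫ ω, Z ω ∂μ| < ε) ∧
    (∀ ε > 0, ∃ K : ℝ, ∀ a : ℕ → ℝ, (∀ t ∈ Finset.Icc 1 T, 0 < a t) →
      (∀ t ∈ Finset.Icc 1 T, K < a t) → |Hfun a - Hinf| < ε) := by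
  have hT' : T ∈ Finset.Icc 1 T := mem_Icc.mpr ⟨hT, le_rfl⟩
  have hle := filtration_le hτmeas hD hℋ
  have hB0 : ∀ t ∈ Finset.Icc 1 T, B t ≠ 0 := fun t ht =>
    hB t ▸ (prod_one_add_pos hr_nonneg (mem_Icc.mp ht).2).ne'
  obtain rfl : Z = fun ω => payoff z T (τ ω) := funext hZ
  have hZm : Measurable[ℋ T] fun ω => payoff z T (τ ω) :=
    measurable_payoff_comp (fun k hk => measurableSet_le_filtration hD hℋ hk) z
  have hZb : ∀ ω, |payoff z T (τ ω)| ≤ _ := fun ω => abs_payoff_le (hτpos ω)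
  have hZle : ∀ ω, payoff z T (τ ω) ≤ Hinf := fun ω => hHinf ▸ payoff_le_sup' (hτpos ω)
  obtain ⟨b, hb, hzb⟩ := exists_mem_eq_sup' (nonempty_Icc.mpr (by omega : 1 ≤ T + 1)) z
  obtain ⟨A, hA, hA0, hAZ⟩ := exists_atom_payoff_eq hτmeas hT hsurv hq hq01 z hb
  refine ⟨fun a ha => ⟨integral_le_premium hT hle ha hB0 hZm hZb (hHfun a ha),
    premium_le_of_le hT hle ha hB0 hZm hZb (hHfun a ha) hZle⟩, fun ε hε => ?_, fun ε hε => ?_⟩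
  · obtain ⟨δ, hδ, hsmall⟩ := (nhdsGT_basis 0).eventually_iff.mp
      (eventually_lt_of_integral_expUtility_le (μ := μ) (hZm.mono (hle T) le_rfl).aemeasurable
        hZb w hε)
    refine ⟨δ, hδ, fun a ha haδ => abs_lt.mpr ⟨?_, ?_⟩⟩
    · linarith [integral_le_premium hT hle ha hB0 hZm hZb (hHfun a ha)]
    · linarith [hsmall ⟨ha T hT', haδ T hT'⟩ (w + Hfun a)
        (integral_expUtility_premium_le hT hle ha hB0 hZm hZb (hHfun a ha))]
  · have hL : 0 ≤ log (μ.real A)⁻¹ :=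
      log_nonneg ((one_le_inv₀ hA0).mpr measureReal_le_one)
    refine ⟨T * (log (μ.real A)⁻¹ + 1) / ε, fun a ha hbig => ?_⟩
    have hβ := div_aggRiskAversion_lt (nonempty_Icc.mpr hT) hL hε (by simpa using hbig)
    have hHinf_le := sub_premium_le hT hle ha hB0 hZm hZb (hHfun a ha) hA hA0
      (fun ω hω => (hAZ ω hω).trans (hHinf ▸ hzb).symm)
    rw [abs_sub_comm, abs_of_nonneg (sub_nonneg.mpr
      (premium_le_of_le hT hle ha hB0 hZm hZb (hHfun a ha) hZle))]
    linarith
end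
end
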